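/- arXiv:2408.09002 — 4 statements merged into one kernel-verified Lean document; each statement's English description precedes it below -/
import Mathlib

section
/- With the notation of the basic sequence: if c > 0 then λ(i) → +∞ as i → ∞; if c < 0 then λ(i) → −∞ as i → ∞. In particular, if c > 0, for every bound N there exists a time T with λ(T) > N. -/
/-- Tape symbols: left endmarker, the unary letter, right endmarker. -/
inductive TapeSym : Type
  | lmark | a | rmark

/-- A linear subset of ℕᵏ. -/
def IsLinearSet' {k : ℕ} (S : Set (Fin k → ℕ)) : Prop :=
  ∃ (m : ℕ) (a : Fin k → ℕ) (b : Fin m → Fin k → ℕ),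
    S = {v | ∃ c : Fin m → ℕ, v = a + ∑ j, c j • b j}

/-- A semilinear (equivalently, Presburger-definable) subset of ℕᵏ. -/
def IsSemilinearSet' {k : ℕ} (S : Set (Fin k → ℕ)) : Prop :=
  ∃ (m : ℕ) (f : Fin m → Set (Fin k → ℕ)),
    (∀ i, IsLinearSet' (f i)) ∧ S = ⋃ i, f i

/-- Eventually periodic subset of ℕ. -/
def EventuallyPeriodic (L : Set ℕ) : Prop :=
  ∃ n₀ p : ℕ, 1 ≤ p ∧ ∀ n, n₀ ≤ n → (n ∈ L ↔ n + p ∈ L)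

/-- The unary language {aⁿ : n ∈ L} is regular. -/
def UnaryRegular (L : Set ℕ) : Prop :=
  ∃ (σ : Type) (_ : Fintype σ) (dfa : DFA Unit σ),
    ∀ n : ℕ, List.replicate n () ∈ dfa.accepts ↔ n ∈ L

/-- The symbol scanned at position `p` on the tape `{0, …, N+1}`. -/
def symAt (N : ℕ) (p : ℤ) : TapeSym :=
  if p ≤ 0 then TapeSym.lmark else if (N : ℤ) + 1 ≤ p then TapeSym.rmark else TapeSym.a

/-- One step of a deterministic two-way unary automaton on the tape `{0, …, N+1}`. -/
def tstep {Q : Type} (δ : Q → TapeSym → Q × ℤ) (N : ℕ) (c : Q × ℤ) : Q × ℤ :=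
  ((δ c.1 (symAt N c.2)).1, c.2 + (δ c.1 (symAt N c.2)).2)

/-- The run after `t` steps from configuration `(s, p)` on the tape `{0, …, N+1}`. -/
def trun {Q : Type} (δ : Q → TapeSym → Q × ℤ) (N : ℕ) (s : Q) (p : ℤ) (t : ℕ) : Q × ℤ :=
  (tstep δ N)^[t] (s, p)

/-- One step of the free run (two-way infinite unary tape, no endmarkers). -/
def freeStep {Q : Type} (δa : Q → Q × ℤ) (c : Q × ℤ) : Q × ℤ :=
  ((δa c.1).1, c.2 + (δa c.1).2)

/-- The free run from state `s` (displacement measured from the start). -/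
def freeRun {Q : Type} (δa : Q → Q × ℤ) (s : Q) (t : ℕ) : Q × ℤ :=
  (freeStep δa)^[t] (s, 0)

/-- The amplitude of a state `s`: the width of the range of displacements along
the first loop of its free run (which is contained in the first `|Q| + 1` steps). -/
noncomputable def amplitude {Q : Type} [Fintype Q] (δa : Q → Q × ℤ) (s : Q) : ℤ :=
  ((Finset.range (Fintype.card Q + 1)).image fun i => (freeRun δa s i).2).max'
      (by simp [Finset.nonempty_range_iff]) -
  ((Finset.range (Fintype.card Q + 1)).image fun i => (freeRun δa s i).2).min'
      (by simp [Finset.nonempty_range_iff])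


/-!
From the first repetition `st k = st ℓ` on, the state sequence is periodic with period
`p = k - ℓ`, so every further `p` steps add the same drift `c` to `λ`. Hence, for `m ≥ ℓ`,
`λ m` is `λ` at one of the finitely many times `ℓ, …, ℓ + p - 1` plus `⌊(m - ℓ) / p⌋ • c`,
which tends to `±∞` with the sign of `c`.
-/

open Filter

lemma add_period_of_eq_iterate {β : Type*} {f : β → β} {st : ℕ → β}
    (hstep : ∀ i, st (i + 1) = f (st i)) {ℓ p : ℕ} (hrep : st (ℓ + p) = st ℓ) {m : ℕ}
    (hm : ℓ ≤ m) : st (m + p) = st m := by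
  induction m, hm using Nat.le_induction with
  | base => exact hrep
  | succ m _ ih => rw [Nat.add_right_comm, hstep, hstep, ih]

lemma add_period_of_sum_periodic {α : Type*} [AddCommGroup α] {g lam : ℕ → α}
    (hlam : ∀ i, lam i = ∑ j ∈ Finset.range i, g j) {ℓ p : ℕ}
    (hg : ∀ m, ℓ ≤ m → g (m + p) = g m) {m : ℕ} (hm : ℓ ≤ m) :
    lam (m + p) = lam m + (lam (ℓ + p) - lam ℓ) := by
  induction m, hm using Nat.le_induction with
  | base => abel
  | succ m hm ih =>
    rw [Nat.add_right_comm, hlam, hlam, Finset.sum_range_succ, Finset.sum_range_succ,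
      ← hlam, ← hlam, ih, hg m hm]
    abel

lemma add_nsmul_of_add_period {α : Type*} [AddMonoid α] {u : ℕ → α} {ℓ p : ℕ} {c : α}
    (hper : ∀ m, ℓ ≤ m → u (m + p) = u m + c) {m : ℕ} (hm : ℓ ≤ m) (n : ℕ) :
    u (m + n * p) = u m + n • c := by
  induction n with
  | zero => simp
  | succ n ih =>
    rw [Nat.succ_mul, ← add_assoc, hper _ (by omega), ih, succ_nsmul, add_assoc]

section PeriodicDrift

variable {α : Type*} [AddCommGroup α] [LinearOrder α] [IsOrderedAddMonoid α]

lemma tendsto_atTop_of_add_period [Archimedean α] {u : ℕ → α} {ℓ p : ℕ} {c : α}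
    (hp : 0 < p) (hc : 0 < c) (hper : ∀ m, ℓ ≤ m → u (m + p) = u m + c) :
    Tendsto u atTop atTop := by
  obtain ⟨M, hM⟩ := Finite.bddBelow_range fun r : Fin p => u (ℓ + r)
  have hbound : ∀ m, ℓ ≤ m → M + ((m - ℓ) / p) • c ≤ u m := by
    intro m hm
    have hdecomp : m = ℓ + (m - ℓ) % p + (m - ℓ) / p * p := by
      have := Nat.mod_add_div' (m - ℓ) p
      omega
    have hres : M ≤ u (ℓ + (m - ℓ) % p) := hM ⟨⟨(m - ℓ) % p, Nat.mod_lt _ hp⟩, rfl⟩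
    calc M + ((m - ℓ) / p) • c ≤ u (ℓ + (m - ℓ) % p) + ((m - ℓ) / p) • c := by gcongr
      _ = u m := by rw [← add_nsmul_of_add_period hper (by omega), ← hdecomp]
  have hlower : Tendsto (fun m => M + ((m - ℓ) / p) • c) atTop atTop :=
    tendsto_atTop_add_const_left _ M <|
      ((Nat.tendsto_div_const_atTop hp.ne').comp (tendsto_sub_atTop_nat ℓ)).atTop_nsmul_const hc
  exact tendsto_atTop_mono' _ (eventually_atTop.2 ⟨ℓ, hbound⟩) hlower

lemma tendsto_atBot_of_add_period [Archimedean α] {u : ℕ → α} {ℓ p : ℕ} {c : α}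
    (hp : 0 < p) (hc : c < 0) (hper : ∀ m, ℓ ≤ m → u (m + p) = u m + c) :
    Tendsto u atTop atBot := by
  have hneg : Tendsto (fun m => -u m) atTop atTop :=
    tendsto_atTop_of_add_period hp (neg_pos.2 hc) fun m hm => by rw [hper m hm, neg_add]
  simpa using tendsto_neg_atBot_iff.2 hneg

end PeriodicDrift

theorem stmt3_general {Q : Type} (δ : Q → Q × ℤ)
    (st : ℕ → Q) (hstep : ∀ i, st (i + 1) = (δ (st i)).1)
    (lam : ℕ → ℤ) (hlam : ∀ i, lam i = ∑ j ∈ Finset.range i, (δ (st j)).2)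
    (ℓ k : ℕ) (hlk : ℓ < k) (hrep : st k = st ℓ)
    (c : ℤ) (hc : c = lam k - lam ℓ) :
    (0 < c → Filter.Tendsto lam Filter.atTop Filter.atTop) ∧
    (c < 0 → Filter.Tendsto lam Filter.atTop Filter.atBot) ∧
    (0 < c → ∀ N : ℤ, ∃ T : ℕ, N < lam T) := by
  obtain ⟨p, rfl⟩ := Nat.exists_eq_add_of_le hlk.le
  have hp : 0 < p := by omega
  have hst : ∀ m, ℓ ≤ m → st (m + p) = st m := fun _ =>
    add_period_of_eq_iterate (f := fun q => (δ q).1) hstep hrep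
  have hper : ∀ m, ℓ ≤ m → lam (m + p) = lam m + c := fun _ hm => by
    rw [hc]
    exact add_period_of_sum_periodic hlam (fun m hm => by rw [hst m hm]) hm
  refine ⟨fun hcpos => tendsto_atTop_of_add_period hp hcpos hper,
    fun hcneg => tendsto_atBot_of_add_period hp hcneg hper, fun hcpos N => ?_⟩
  exact ((tendsto_atTop_of_add_period hp hcpos hper).eventually_gt_atTop N).exists

/-- positive loop drift pushes the head to `+∞`, negative drift to `-∞`. -/
theorem stmt3 {Q : Type} [Fintype Q] (δ : Q → Q × ℤ)
    (hδ : ∀ q, (δ q).2 = -1 ∨ (δ q).2 = 0 ∨ (δ q).2 = 1)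
    (s : Q) (st : ℕ → Q) (h0 : st 0 = s) (hstep : ∀ i, st (i + 1) = (δ (st i)).1)
    (lam : ℕ → ℤ) (hlam : ∀ i, lam i = ∑ j ∈ Finset.range i, (δ (st j)).2)
    (ℓ k : ℕ) (hlk : ℓ < k) (hrep : st k = st ℓ)
    (hdist : ∀ i j, i < j → j < k → st i ≠ st j)
    (c : ℤ) (hc : c = lam k - lam ℓ) :
    (0 < c → Filter.Tendsto lam Filter.atTop Filter.atTop) ∧
    (c < 0 → Filter.Tendsto lam Filter.atTop Filter.atBot) ∧
    (0 < c → ∀ N : ℤ, ∃ T : ℕ, N < lam T) :=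
  stmt3_general δ st hstep lam hlam ℓ k hlk hrep c hc
end

section
/- For a deterministic unary two-way automaton with state set Q and for any S ⊆ Q, the relation Reach_S = {(N, s, s', p, p', T) : on the tape {0,…,N+1}, starting in configuration (s,p), the automaton reaches (s',p') at time T without visiting positions 0 or N+1 at any time 0 < t < T and without entering a state of S at any time 0 < t < T} is definable by a Presburger (first-order Presburger arithmetic) formula in the numeric variables N, p, p', T, for each fixed pair of states (s, s'). -/
/-!
Away from the endmarkers the head moves by at most one cell per step, so after its first step a run
that avoids positions `0` and `N + 1` stays in one of the three zones `z < 0`, `0 < z < N + 1`,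
`N + 1 < z`, where it reads a fixed letter `x`. From then on it is the free run of the automaton on
`x`, whose states are eventually periodic and whose displacement grows by a fixed amount per period.
So, once the letters read at the first step and afterwards are fixed, every condition in `Reach_S`
is a linear constraint on `N, p, p', T` and the number of completed periods, and these are combined
by Boolean operations and quantifiers over `ℕ`, under which semilinear sets are closed.
-/

open Set

section Semilinear

variable {ι : Type*}

theorem IsSemilinearSet.isSemilinearSet' {k : ℕ} {s : Set (Fin k → ℕ)} (hs : IsSemilinearSet s) :
    IsSemilinearSet' s := by
  classical
  obtain ⟨S, hS, rfl⟩ := isSemilinearSet_iff.1 hs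
  have hlin : ∀ t ∈ S, IsLinearSet' t := by
    intro t ht
    obtain ⟨a, m, f, rfl⟩ := isLinearSet_iff_exists_fin_addMonoidHom.1 (hS t ht)
    refine ⟨m, a, fun j => f (Pi.single j 1), ?_⟩
    ext v
    simp only [mem_vadd_set, mem_range, vadd_eq_add, exists_exists_eq_and, mem_ofPred_eq]
    refine exists_congr fun c => ?_
    have hf : f c = ∑ j, c j • f (Pi.single j 1) := by
      conv_lhs => rw [← Finset.univ_sum_single c]
      rw [map_sum]
      refine Finset.sum_congr rfl fun j _ => ?_
      rw [← map_nsmul, ← Pi.single_smul, smul_eq_mul, mul_one]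
    rw [hf, eq_comm]
  refine ⟨S.card, fun i => (S.equivFin.symm i : Set (Fin k → ℕ)),
    fun i => hlin _ (S.equivFin.symm i).2, ?_⟩
  ext v
  simp only [mem_sUnion, Finset.mem_coe, mem_iUnion]
  exact ⟨fun ⟨t, ht, hv⟩ => ⟨S.equivFin ⟨t, ht⟩, by simpa using hv⟩,
    fun ⟨i, hv⟩ => ⟨_, (S.equivFin.symm i).2, hv⟩⟩

theorem isSemilinearSet_setOf_const [Finite ι] (p : Prop) : IsSemilinearSet {_x : ι → ℕ | p} := by
  by_cases hp : p <;> simp [hp]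

theorem IsSemilinearSet.preimage_comp {κ : Type*} [Finite κ] {s : Set (ι → ℕ)}
    (hs : IsSemilinearSet s) (σ : ι → κ) : IsSemilinearSet {x : κ → ℕ | x ∘ σ ∈ s} :=
  hs.preimage (LinearMap.funLeft ℕ ℕ σ)

theorem IsSemilinearSet.exists_nat {p : (ι → ℕ) → ℕ → Prop}
    (h : IsSemilinearSet {w : ι ⊕ Unit → ℕ | p (w ∘ Sum.inl) (w (Sum.inr ()))}) :
    IsSemilinearSet {x | ∃ n, p x n} := by
  convert h.proj' (p := fun x y => p x (y ())) using 1
  ext x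
  exact ⟨fun ⟨n, hn⟩ => ⟨fun _ => n, hn⟩, fun ⟨y, hy⟩ => ⟨y (), hy⟩⟩

theorem IsSemilinearSet.forall_nat [Finite ι] {p : (ι → ℕ) → ℕ → Prop}
    (h : IsSemilinearSet {w : ι ⊕ Unit → ℕ | p (w ∘ Sum.inl) (w (Sum.inr ()))}) :
    IsSemilinearSet {x | ∀ n, p x n} := by
  convert (IsSemilinearSet.exists_nat (p := fun x n => ¬ p x n) h.compl).compl using 1
  ext x
  simp

theorem IsSemilinearSet.setOf_imp [Finite ι] {p q : (ι → ℕ) → Prop}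
    (hp : IsSemilinearSet {x | p x}) (hq : IsSemilinearSet {x | q x}) :
    IsSemilinearSet {x | p x → q x} := by
  convert hp.compl.union hq using 1
  ext x
  exact imp_iff_not_or

def IsIntAffine (ℓ : (ι → ℕ) → ℤ) : Prop :=
  ∃ (c : ℤ) (f : (ι → ℕ) →+ ℤ), ∀ x, ℓ x = c + f x

namespace IsIntAffine

theorem const (c : ℤ) : IsIntAffine fun _ : ι → ℕ => c := ⟨c, 0, by simp⟩

theorem coord (i : ι) : IsIntAffine fun x : ι → ℕ => (x i : ℤ) :=
  ⟨0, (Nat.castAddMonoidHom ℤ).comp (Pi.evalAddMonoidHom (fun _ => ℕ) i), by simp⟩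

variable {ℓ₁ ℓ₂ : (ι → ℕ) → ℤ}

theorem add (h₁ : IsIntAffine ℓ₁) (h₂ : IsIntAffine ℓ₂) : IsIntAffine fun x => ℓ₁ x + ℓ₂ x := by
  obtain ⟨c₁, f₁, h₁⟩ := h₁
  obtain ⟨c₂, f₂, h₂⟩ := h₂
  exact ⟨c₁ + c₂, f₁ + f₂, fun x => by simp [h₁, h₂]; ring⟩

theorem sub (h₁ : IsIntAffine ℓ₁) (h₂ : IsIntAffine ℓ₂) : IsIntAffine fun x => ℓ₁ x - ℓ₂ x := by
  obtain ⟨c₁, f₁, h₁⟩ := h₁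
  obtain ⟨c₂, f₂, h₂⟩ := h₂
  exact ⟨c₁ - c₂, f₁ - f₂, fun x => by simp [h₁, h₂]; ring⟩

theorem mul_const (h : IsIntAffine ℓ₁) (a : ℤ) : IsIntAffine fun x => ℓ₁ x * a := by
  obtain ⟨c, f, h⟩ := h
  exact ⟨c * a, a • f, fun x => by simp [h]; ring⟩

variable [Finite ι]

theorem isSemilinearSet_setOf_nonneg (h : IsIntAffine ℓ₁) : IsSemilinearSet {x | 0 ≤ ℓ₁ x} := by
  obtain ⟨c, f, h⟩ := h
  have hIci : IsSemilinearSet {z : ℤ | -c ≤ z} := by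
    convert (IsSemilinearSet.univ.image (Nat.castAddMonoidHom ℤ)).vadd (-c) using 1
    ext z
    simp only [mem_ofPred_eq, mem_vadd_set, image_univ, mem_range, vadd_eq_add,
      exists_exists_eq_and]
    exact ⟨fun hz => ⟨(z + c).toNat, by simp; omega⟩, fun ⟨n, hn⟩ => by simp at hn; omega⟩
  convert hIci.preimage f using 1
  ext x
  simp [h]
  omega

theorem isSemilinearSet_setOf_le (h₁ : IsIntAffine ℓ₁) (h₂ : IsIntAffine ℓ₂) :
    IsSemilinearSet {x | ℓ₁ x ≤ ℓ₂ x} := by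
  simpa only [sub_nonneg] using (h₂.sub h₁).isSemilinearSet_setOf_nonneg

theorem isSemilinearSet_setOf_lt (h₁ : IsIntAffine ℓ₁) (h₂ : IsIntAffine ℓ₂) :
    IsSemilinearSet {x | ℓ₁ x < ℓ₂ x} := by
  simpa only [Int.add_one_le_iff] using (h₁.add (const 1)).isSemilinearSet_setOf_le h₂

theorem isSemilinearSet_setOf_eq (h₁ : IsIntAffine ℓ₁) (h₂ : IsIntAffine ℓ₂) :
    IsSemilinearSet {x | ℓ₁ x = ℓ₂ x} := by
  have h := (h₁.isSemilinearSet_setOf_le h₂).inter (h₂.isSemilinearSet_setOf_le h₁)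
  simp only [← ofPred_and, ← le_antisymm_iff] at h
  exact h

end IsIntAffine

end Semilinear

section EventuallyPeriodic

variable {ι Q : Type*} [Finite ι]

theorem apply_add_mul_period {r : ℕ → Q × ℤ} {a π : ℕ} {D : ℤ}
    (hr : ∀ k ≥ a, r (k + π) = ((r k).1, (r k).2 + D)) {k : ℕ} (hk : a ≤ k) (n : ℕ) :
    r (k + n * π) = ((r k).1, (r k).2 + n * D) := by
  induction n with
  | zero => simp
  | succ n ih =>
    rw [add_mul, one_mul, ← add_assoc, hr _ (by omega), ih]
    push_cast
    ring_nf

/-- Past `a`, each residue class of `k` modulo `π` is `{a + i + n * π}`, on which `(r k).1` is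
constant and `(r k).2` is affine in `n`. -/
theorem isSemilinearSet_setOf_eventuallyPeriodic {r : ℕ → Q × ℤ} {a π : ℕ} {D : ℤ} (hπ : 0 < π)
    (hr : ∀ k ≥ a, r (k + π) = ((r k).1, (r k).2 + D)) {P : Q → (ι → ℕ) → ℤ → Prop}
    (hP : ∀ q ℓ, IsIntAffine ℓ → IsSemilinearSet {w : ι ⊕ Unit → ℕ | P q (w ∘ Sum.inl) (ℓ w)}) :
    IsSemilinearSet
      {w : ι ⊕ Unit → ℕ | P (r (w (Sum.inr ()))).1 (w ∘ Sum.inl) (r (w (Sum.inr ()))).2} := by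
  have hsplit : {w : ι ⊕ Unit → ℕ | P (r (w (Sum.inr ()))).1 (w ∘ Sum.inl) (r (w (Sum.inr ()))).2} =
      (⋃ k : Fin a, {w | w (Sum.inr ()) = (k : ℕ) ∧ P (r k).1 (w ∘ Sum.inl) (r k).2}) ∪
      ⋃ i : Fin π, {w | ∃ n, w (Sum.inr ()) = a + i + n * π ∧
        P (r (a + i)).1 (w ∘ Sum.inl) ((r (a + i)).2 + n * D)} := by
    ext w
    simp only [mem_ofPred_eq, mem_union, mem_iUnion]
    constructor
    · intro hw
      set k := w (Sum.inr ())
      by_cases hk : k < a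
      · exact Or.inl ⟨⟨k, hk⟩, rfl, hw⟩
      · have hdiv := Nat.mod_add_div' (k - a) π
        have hk' : k = a + (k - a) % π + (k - a) / π * π := by omega
        rw [hk', apply_add_mul_period hr (Nat.le_add_right _ _)] at hw
        exact Or.inr ⟨⟨_, Nat.mod_lt _ hπ⟩, _, hk', hw⟩
    · rintro (⟨k, hwk, hw⟩ | ⟨i, n, hwn, hw⟩)
      · rwa [hwk]
      · rwa [hwn, apply_add_mul_period hr (Nat.le_add_right _ _)]
  rw [hsplit]
  refine .union (.iUnion fun k => .inter ?_ (hP _ _ (.const _))) (.iUnion fun i => .exists_nat ?_)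
  · exact_mod_cast (IsIntAffine.coord (Sum.inr ())).isSemilinearSet_setOf_eq (.const (k : ℤ))
  · refine .inter ?_ ((hP _ _ ((IsIntAffine.const _).add
      ((IsIntAffine.coord (Sum.inr ())).mul_const D))).preimage_comp (Sum.map Sum.inl id))
    exact_mod_cast (IsIntAffine.coord (Sum.inl (Sum.inr ()))).isSemilinearSet_setOf_eq
      ((IsIntAffine.const (a + i : ℤ)).add ((IsIntAffine.coord (Sum.inr ())).mul_const π))

end EventuallyPeriodic

instance : Finite TapeSym :=
  Finite.of_surjective ![TapeSym.lmark, .a, .rmark] fun x => by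
    cases x
    exacts [⟨0, rfl⟩, ⟨1, rfl⟩, ⟨2, rfl⟩]

/-- For fixed `x` this set of positions `z` is an interval, which a head moving by at most one cell
can only leave through an endmarker. -/
def InZone (x : TapeSym) (N : ℕ) (z : ℤ) : Prop :=
  symAt N z = x ∧ z ≠ 0 ∧ z ≠ N + 1

theorem InZone.of_abs_sub_le_one {x : TapeSym} {N : ℕ} {z z' : ℤ} (h : InZone x N z)
    (hzz' : |z' - z| ≤ 1) (h₀ : z' ≠ 0) (h₁ : z' ≠ N + 1) : InZone x N z' := by
  obtain ⟨rfl, hz₀, hz₁⟩ := h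
  refine ⟨?_, h₀, h₁⟩
  rw [abs_le] at hzz'
  unfold symAt
  split_ifs <;> first | rfl | omega

section Atoms

variable {ι : Type*} [Finite ι] {ℓ : (ι → ℕ) → ℤ}

theorem isSemilinearSet_setOf_symAt_eq (j : ι) (hℓ : IsIntAffine ℓ) (x : TapeSym) :
    IsSemilinearSet {w | symAt (w j) (ℓ w) = x} := by
  have hl := hℓ.isSemilinearSet_setOf_le (.const 0)
  have hr := ((IsIntAffine.coord j).add (.const 1)).isSemilinearSet_setOf_le hℓ
  cases x <;> [convert hl using 1; convert hl.compl.inter hr.compl using 1;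
    convert hl.compl.inter hr using 1] <;>
  · ext w
    simp only [mem_ofPred_eq, mem_inter_iff, mem_compl_iff, symAt]
    split_ifs <;> simp_all

theorem isSemilinearSet_setOf_inZone (j : ι) (hℓ : IsIntAffine ℓ) (x : TapeSym) :
    IsSemilinearSet {w | InZone x (w j) (ℓ w)} :=
  (isSemilinearSet_setOf_symAt_eq j hℓ x).inter
    ((hℓ.isSemilinearSet_setOf_eq (.const 0)).compl.inter
      (hℓ.isSemilinearSet_setOf_eq ((IsIntAffine.coord j).add (.const 1))).compl)

end Atoms

theorem Function.iterate_eq_iterate_of_forall_lt {α : Type*} {f g : α → α} {c : α} {m : ℕ}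
    (h : ∀ u < m, f (g^[u] c) = g (g^[u] c)) {u : ℕ} (hu : u ≤ m) : f^[u] c = g^[u] c := by
  induction u with
  | zero => rfl
  | succ u ih =>
    rw [Function.iterate_succ_apply', Function.iterate_succ_apply', ih (by omega), h u hu]

section Runs

variable {Q : Type}

theorem freeStep_iterate (δa : Q → Q × ℤ) (q : Q) (z : ℤ) (t : ℕ) :
    (freeStep δa)^[t] (q, z) = ((freeRun δa q t).1, z + (freeRun δa q t).2) := by
  induction t with
  | zero => simp [freeRun]
  | succ t ih =>
    simp only [freeRun, Function.iterate_succ_apply'] at ih ⊢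
    rw [ih]
    simp only [freeStep, add_assoc]

theorem freeRun_add (δa : Q → Q × ℤ) (q : Q) (t u : ℕ) :
    freeRun δa q (t + u) =
      ((freeRun δa (freeRun δa q u).1 t).1,
        (freeRun δa q u).2 + (freeRun δa (freeRun δa q u).1 t).2) := by
  rw [freeRun, Function.iterate_add_apply, ← freeStep_iterate]
  rfl

theorem freeRun_eventually_periodic [Finite Q] (δa : Q → Q × ℤ) (q : Q) :
    ∃ (a π : ℕ) (D : ℤ), 0 < π ∧
      ∀ k ≥ a, freeRun δa q (k + π) = ((freeRun δa q k).1, (freeRun δa q k).2 + D) := by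
  obtain ⟨i, j, hne, hq⟩ := Finite.exists_ne_map_eq_of_infinite fun n => (freeRun δa q n).1
  wlog hij : i < j generalizing i j
  · exact this j i hne.symm hq.symm (by omega)
  refine ⟨i, j - i, (freeRun δa q j).2 - (freeRun δa q i).2, by omega, fun k hk => ?_⟩
  rw [show k + (j - i) = (k - i) + j by omega, freeRun_add, ← hq,
    show k = (k - i) + i by omega, freeRun_add, Nat.sub_add_cancel hk]
  simp only [Prod.mk.injEq, true_and]
  ring

theorem trun_succ (δ : Q → TapeSym → Q × ℤ) (N : ℕ) (s : Q) (p : ℤ) (t : ℕ) :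
    trun δ N s p (t + 1) = tstep δ N (trun δ N s p t) :=
  Function.iterate_succ_apply' _ _ _

theorem tstep_eq_freeStep {δ : Q → TapeSym → Q × ℤ} {N : ℕ} {c : Q × ℤ} {x : TapeSym}
    (h : symAt N c.2 = x) : tstep δ N c = freeStep (fun q => δ q x) c := by
  rw [tstep, freeStep, h]

def tailRun (δ : Q → TapeSym → Q × ℤ) (s : Q) (y x : TapeSym) : ℕ → Q × ℤ :=
  freeRun (fun q => δ q x) (δ s y).1

variable {δ : Q → TapeSym → Q × ℤ} {N : ℕ} {s : Q} {p : ℤ} {x : TapeSym} {M : ℕ}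

theorem trun_succ_eq_iterate (u : ℕ) :
    trun δ N s p (u + 1) = (tstep δ N)^[u] ((δ s (symAt N p)).1, p + (δ s (symAt N p)).2) :=
  Function.iterate_succ_apply _ _ _

theorem trun_succ_of_symAt_tailRun
    (hx : ∀ u < M, symAt N (p + (δ s (symAt N p)).2 + (tailRun δ s (symAt N p) x u).2) = x) :
    ∀ u ≤ M, trun δ N s p (u + 1) = ((tailRun δ s (symAt N p) x u).1,
      p + (δ s (symAt N p)).2 + (tailRun δ s (symAt N p) x u).2) := by
  intro u hu
  rw [trun_succ_eq_iterate, Function.iterate_eq_iterate_of_forall_lt (g := freeStep fun q => δ q x)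
    (fun u hu => tstep_eq_freeStep (by rw [freeStep_iterate]; exact hx u hu)) hu, freeStep_iterate]
  rfl

theorem trun_succ_of_symAt_trun (hx : ∀ u < M, symAt N (trun δ N s p (u + 1)).2 = x) :
    ∀ u ≤ M, trun δ N s p (u + 1) = ((tailRun δ s (symAt N p) x u).1,
      p + (δ s (symAt N p)).2 + (tailRun δ s (symAt N p) x u).2) := by
  intro u hu
  rw [trun_succ_eq_iterate, ← Function.iterate_eq_iterate_of_forall_lt
    (fun u hu => (tstep_eq_freeStep (by rw [← trun_succ_eq_iterate]; exact hx u hu)).symm) hu,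
    freeStep_iterate]
  rfl

theorem inZone_trun_succ (hδ : ∀ q x, (δ q x).2 = -1 ∨ (δ q x).2 = 0 ∨ (δ q x).2 = 1)
    (havoid : ∀ t, 0 < t → t < M + 1 → (trun δ N s p t).2 ≠ 0 ∧ (trun δ N s p t).2 ≠ N + 1) :
    ∀ u < M, InZone (symAt N (trun δ N s p 1).2) N (trun δ N s p (u + 1)).2 := by
  intro u hu
  induction u with
  | zero => exact ⟨rfl, havoid 1 one_pos (by omega)⟩
  | succ u ih =>
    have hmove : |(trun δ N s p (u + 1 + 1)).2 - (trun δ N s p (u + 1)).2| ≤ 1 := by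
      rw [trun_succ, tstep, add_sub_cancel_left, abs_le]
      rcases hδ (trun δ N s p (u + 1)).1 (symAt N (trun δ N s p (u + 1)).2) with h | h | h <;>
        rw [h] <;> norm_num
    exact (ih (by omega)).of_abs_sub_le_one hmove (havoid _ (by omega) (by omega)).1
      (havoid _ (by omega) (by omega)).2

end Runs

section Reach

variable {Q : Type} (δ : Q → TapeSym → Q × ℤ) (S : Set Q) (s s' : Q)

def Reaches (N p p' T : ℕ) : Prop :=
  p ≤ N + 1 ∧ p' ≤ N + 1 ∧ trun δ N s p T = (s', (p' : ℤ)) ∧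
    ∀ t, 0 < t → t < T →
      (trun δ N s p t).2 ≠ 0 ∧ (trun δ N s p t).2 ≠ (N : ℤ) + 1 ∧ (trun δ N s p t).1 ∉ S

def ReachesVia (x y : TapeSym) (N p p' M : ℕ) : Prop :=
  symAt N p = y ∧ p ≤ N + 1 ∧ p' ≤ N + 1 ∧
    ((tailRun δ s y x M).1 = s' ∧ (p' : ℤ) = p + (δ s y).2 + (tailRun δ s y x M).2) ∧
    ∀ k < M, InZone x N (p + (δ s y).2 + (tailRun δ s y x k).2) ∧ (tailRun δ s y x k).1 ∉ S

variable {δ S s s'} {N p p' : ℕ}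

theorem reaches_zero_iff : Reaches δ S s s' N p p' 0 ↔ s = s' ∧ p = p' ∧ p ≤ N + 1 := by
  simp only [Reaches, trun, Function.iterate_zero, id, Prod.mk.injEq, Nat.cast_inj]
  constructor
  · rintro ⟨hp, -, ⟨hs, rfl⟩, -⟩
    exact ⟨hs, rfl, hp⟩
  · rintro ⟨hs, rfl, hp⟩
    exact ⟨hp, hp, ⟨hs, rfl⟩, fun t ht ht' => by omega⟩

theorem reaches_succ_iff (hδ : ∀ q x, (δ q x).2 = -1 ∨ (δ q x).2 = 0 ∨ (δ q x).2 = 1) (M : ℕ) :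
    Reaches δ S s s' N p p' (M + 1) ↔ ∃ x y, ReachesVia δ S s s' x y N p p' M := by
  constructor
  · rintro ⟨hp, hp', hrun, havoid⟩
    have hzone := inZone_trun_succ hδ fun t ht ht' => ⟨(havoid t ht ht').1, (havoid t ht ht').2.1⟩
    have hshape := trun_succ_of_symAt_trun fun u hu => (hzone u hu).1
    refine ⟨symAt N (trun δ N s p 1).2, _, rfl, hp, hp', ?_, fun k hk => ?_⟩
    · rw [hshape M le_rfl, Prod.mk.injEq] at hrun
      exact ⟨hrun.1, hrun.2.symm⟩
    · have hzk := hzone k hk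
      have hk' := havoid (k + 1) (by omega) (by omega)
      rw [hshape k hk.le] at hzk hk'
      exact ⟨hzk, hk'.2.2⟩
  · rintro ⟨x, y, rfl, hp, hp', ⟨hs', hp'eq⟩, hzone⟩
    have hshape := trun_succ_of_symAt_tailRun fun u hu => (hzone u hu).1.1
    refine ⟨hp, hp', by rw [hshape M le_rfl, hs', hp'eq], fun t ht ht' => ?_⟩
    obtain ⟨k, rfl⟩ : ∃ k, t = k + 1 := ⟨t - 1, by omega⟩
    rw [hshape k (by omega)]
    exact ⟨(hzone k (by omega)).1.2.1, (hzone k (by omega)).1.2.2, (hzone k (by omega)).2⟩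

variable (δ S s s')

theorem isSemilinearSet_reachesVia [Finite Q] (x y : TapeSym) :
    IsSemilinearSet
      {v : Fin 4 → ℕ | ∃ M, v 3 = M + 1 ∧ ReachesVia δ S s s' x y (v 0) (v 1) (v 2) M} := by
  obtain ⟨a, π, D, hπ, hr⟩ := freeRun_eventually_periodic (fun q => δ q x) (δ s y).1
  have hrun := fun P hP => isSemilinearSet_setOf_eventuallyPeriodic (ι := Fin 4) hπ hr (P := P) hP
  have hN := IsIntAffine.coord (ι := Fin 4 ⊕ Unit) (Sum.inl 0)
  have hp := IsIntAffine.coord (ι := Fin 4 ⊕ Unit) (Sum.inl 1)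
  have hp' := IsIntAffine.coord (ι := Fin 4 ⊕ Unit) (Sum.inl 2)
  have hend := hrun (fun q v z => q = s' ∧ (v 2 : ℤ) = v 1 + (δ s y).2 + z) fun q ℓ hℓ =>
    (isSemilinearSet_setOf_const _).inter
      (hp'.isSemilinearSet_setOf_eq ((hp.add (.const _)).add hℓ))
  have hinside := hrun (fun q v z => InZone x (v 0) (v 1 + (δ s y).2 + z) ∧ q ∉ S) fun q ℓ hℓ =>
    (isSemilinearSet_setOf_inZone (Sum.inl 0) ((hp.add (.const _)).add hℓ) x).inter
      (isSemilinearSet_setOf_const _)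
  refine .exists_nat (.inter ?_ (.inter ?_ (.inter ?_ (.inter ?_ (.inter hend ?_)))))
  · exact_mod_cast (IsIntAffine.coord (Sum.inl 3)).isSemilinearSet_setOf_eq
      ((IsIntAffine.coord (Sum.inr ())).add (.const 1))
  · exact isSemilinearSet_setOf_symAt_eq (Sum.inl 0) hp y
  · exact_mod_cast hp.isSemilinearSet_setOf_le (hN.add (.const 1))
  · exact_mod_cast hp'.isSemilinearSet_setOf_le (hN.add (.const 1))
  · refine .forall_nat (.setOf_imp ?_ (hinside.preimage_comp (Sum.map Sum.inl id)))
    exact_mod_cast (IsIntAffine.coord (Sum.inr ())).isSemilinearSet_setOf_lt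
      (.coord (Sum.inl (Sum.inr ())))

theorem isSemilinearSet_reaches [Finite Q]
    (hδ : ∀ q x, (δ q x).2 = -1 ∨ (δ q x).2 = 0 ∨ (δ q x).2 = 1) :
    IsSemilinearSet {v : Fin 4 → ℕ | Reaches δ S s s' (v 0) (v 1) (v 2) (v 3)} := by
  have hsplit : {v : Fin 4 → ℕ | Reaches δ S s s' (v 0) (v 1) (v 2) (v 3)} =
      {v | v 3 = 0 ∧ s = s' ∧ v 1 = v 2 ∧ v 1 ≤ v 0 + 1} ∪
        ⋃ x, ⋃ y, {v | ∃ M, v 3 = M + 1 ∧ ReachesVia δ S s s' x y (v 0) (v 1) (v 2) M} := by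
    ext v
    simp only [mem_ofPred_eq, mem_union, mem_iUnion]
    rcases hT : v 3 with _ | M
    · simp [reaches_zero_iff]
    · simp [reaches_succ_iff hδ]
  rw [hsplit]
  refine .union ?_ (.iUnion fun x => .iUnion fun y => isSemilinearSet_reachesVia δ S s s' x y)
  refine .inter ?_ ((isSemilinearSet_setOf_const _).inter (.inter ?_ ?_))
  · exact_mod_cast (IsIntAffine.coord 3).isSemilinearSet_setOf_eq (.const 0)
  · exact_mod_cast (IsIntAffine.coord 1).isSemilinearSet_setOf_eq (.coord 2)
  · exact_mod_cast (IsIntAffine.coord 1).isSemilinearSet_setOf_le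
      ((IsIntAffine.coord 0).add (.const 1))

end Reach

/-- for fixed states `s, s'` and a set `S` of forbidden intermediate states,
the relation Reach_S(N, p, p', T) (reaching `(s', p')` from `(s, p)` at time `T` on the
tape `{0,…,N+1}` without visiting the endmarkers nor `S` strictly in between) is
Presburger-definable, i.e. semilinear in `(N, p, p', T)`. -/
theorem stmt7 {Q : Type} [Fintype Q] (δ : Q → TapeSym → Q × ℤ)
    (hδ : ∀ q x, (δ q x).2 = -1 ∨ (δ q x).2 = 0 ∨ (δ q x).2 = 1)
    (S : Set Q) (s s' : Q) :
    IsSemilinearSet' {v : Fin 4 → ℕ |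
      v 1 ≤ v 0 + 1 ∧ v 2 ≤ v 0 + 1 ∧
      trun δ (v 0) s (v 1) (v 3) = (s', (v 2 : ℤ)) ∧
      ∀ t, 0 < t → t < v 3 →
        (trun δ (v 0) s (v 1) t).2 ≠ 0 ∧
        (trun δ (v 0) s (v 1) t).2 ≠ (v 0 : ℤ) + 1 ∧
        (trun δ (v 0) s (v 1) t).1 ∉ S} :=
  (isSemilinearSet_reaches δ S s s' hδ).isSemilinearSet'
end

section
/- For a deterministic unary two-way automaton, a right traversal of a tape of length N (from the left endmarker to the right endmarker without touching the right endmarker earlier) rebounds on the left endmarker at most 2|Q| times, and its duration is at most G·N for a constant G depending only on the automaton, provided N exceeds all amplitudes. -/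
/-!
Until the run first reaches the right endmarker at time `T` it cannot repeat a configuration:
a deterministic run through a repeated configuration is periodic from then on and would never
get there. So position `0` is visited in pairwise distinct states, and `T` is at most the number
of configurations available before time `T`. Positions before `T` are at most `N`, and never
drop below `-|Q|`: left of the endmarker the moves do not depend on the position, so a run that
goes more than `|Q|` cells left of it repeats a state while staying there. A non-positive drift
between the two visits traps the run left of the endmarker forever; a positive one means the
run had already been lower, contradicting the choice of the first time it went below `-|Q|`.
Hence `T ≤ |Q| (N + |Q| + 1) ≤ |Q| (|Q| + 2) N`, as `N ≥ 1` exceeds a (nonnegative) amplitude.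
-/

namespace Function

theorem injOn_iterate_Iic_of_first_hit {α : Type*} {f : α → α} {x : α} {P : α → Prop} {T : ℕ}
    (hT : P (f^[T] x)) (hpre : ∀ t < T, ¬ P (f^[t] x)) :
    Set.InjOn (fun t => f^[t] x) (Set.Iic T) := by
  have hne : ∀ t₁ t₂, t₁ < t₂ → t₂ ≤ T → f^[t₁] x ≠ f^[t₂] x := by
    intro t₁ t₂ h₁₂ h₂ heq
    have hper : IsPeriodicPt f (t₂ - t₁) (f^[t₁] x) := by
      rw [IsPeriodicPt, IsFixedPt, ← iterate_add_apply, Nat.sub_add_cancel h₁₂.le]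
      exact heq.symm
    refine hpre ((T - t₁) % (t₂ - t₁) + t₁) ?_ ?_
    · have := Nat.mod_lt (T - t₁) (Nat.sub_pos_of_lt h₁₂)
      omega
    · rwa [iterate_add_apply, hper.iterate_mod_apply, ← iterate_add_apply,
        Nat.sub_add_cancel (h₁₂.trans_le h₂).le]
  intro t₁ h₁ t₂ h₂ heq
  rcases lt_trichotomy t₁ t₂ with h | h | h
  · exact absurd heq (hne _ _ h h₂)
  · exact h
  · exact absurd heq.symm (hne _ _ h h₁)

end Function

theorem abs_sub_le_of_abs_succ_sub_le_one {u : ℕ → ℤ} (hu : ∀ t, |u (t + 1) - u t| ≤ 1)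
    (t k : ℕ) : |u (t + k) - u t| ≤ k := by
  induction k with
  | zero => simp
  | succ k ih =>
    calc |u (t + (k + 1)) - u t| ≤ |u (t + k + 1) - u (t + k)| + |u (t + k) - u t| :=
          abs_sub_le _ _ _
      _ ≤ 1 + k := add_le_add (hu _) ih
      _ = (k + 1 : ℕ) := by push_cast; ring

theorem le_card_mul_of_injOn {Q : Type} [Fintype Q] {c : ℕ → Q × ℤ} {T : ℕ} {a b : ℤ}
    (hinj : Set.InjOn c (Set.Iio T)) (hc : ∀ t < T, a ≤ (c t).2 ∧ (c t).2 ≤ b) :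
    T ≤ Fintype.card Q * (b + 1 - a).toNat := by
  classical
  calc T = (Finset.range T).card := (Finset.card_range T).symm
    _ ≤ (Finset.univ ×ˢ Finset.Icc a b).card :=
        Finset.card_le_card_of_injOn c
          (fun t ht => by simpa using hc t (Finset.mem_range.mp ht)) (by simpa using hinj)
    _ = Fintype.card Q * (b + 1 - a).toNat := by
        rw [Finset.card_product, Finset.card_univ, Int.card_Icc]

theorem amplitude_nonneg {Q : Type} [Fintype Q] (δa : Q → Q × ℤ) (s : Q) :
    0 ≤ amplitude δa s :=
  sub_nonneg.mpr (Finset.min'_le_max' _ _)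

section TwoWayRun

variable {Q : Type} (δ : Q → TapeSym → Q × ℤ) (N : ℕ)

theorem symAt_of_nonpos {p : ℤ} (hp : p ≤ 0) : symAt N p = TapeSym.lmark := if_pos hp

theorem trun_add (s : Q) (p : ℤ) (i t : ℕ) :
    trun δ N s p (i + t) = (tstep δ N)^[i] (trun δ N s p t) :=
  Function.iterate_add_apply _ _ _ _

theorem abs_trun_snd_sub_le (hδ : ∀ q x, |(δ q x).2| ≤ 1) (s : Q) (p : ℤ) (t k : ℕ) :
    |(trun δ N s p (t + k)).2 - (trun δ N s p t).2| ≤ k := by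
  refine abs_sub_le_of_abs_succ_sub_le_one (u := fun t => (trun δ N s p t).2) (fun t => ?_) t k
  rw [Nat.add_comm, trun_add]
  simpa [tstep] using hδ _ _

theorem tstep_shift_of_nonpos {c : Q × ℤ} {d : ℤ} (hc : c.2 ≤ 0) (hd : d ≤ 0) :
    tstep δ N (c.1, c.2 + d) = ((tstep δ N c).1, (tstep δ N c).2 + d) := by
  simp only [tstep, symAt_of_nonpos N hc, symAt_of_nonpos N (by omega : c.2 + d ≤ 0)]
  ext <;> simp only
  ring

theorem iterate_tstep_shift_of_nonpos {c : Q × ℤ} {d : ℤ} {m : ℕ} (hd : d ≤ 0)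
    (hc : ∀ i < m, ((tstep δ N)^[i] c).2 ≤ 0) :
    (tstep δ N)^[m] (c.1, c.2 + d) = (((tstep δ N)^[m] c).1, ((tstep δ N)^[m] c).2 + d) := by
  induction m with
  | zero => rfl
  | succ m ih =>
    rw [Function.iterate_succ_apply', Function.iterate_succ_apply', ih fun i hi => hc i (by omega)]
    exact tstep_shift_of_nonpos δ N (hc m (by omega)) hd

theorem iterate_tstep_snd_nonpos_of_drift_nonpos {c : Q × ℤ} {d : ℤ} {per : ℕ} (hper : 0 < per)
    (hd : d ≤ 0) (hcycle : (tstep δ N)^[per] c = (c.1, c.2 + d))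
    (hc : ∀ i < per, ((tstep δ N)^[i] c).2 ≤ 0) (m : ℕ) : ((tstep δ N)^[m] c).2 ≤ 0 := by
  induction m using Nat.strong_induction_on with
  | _ m ih =>
    rcases lt_or_ge m per with hm | hm
    · exact hc m hm
    · obtain ⟨m', rfl⟩ := Nat.exists_eq_add_of_le' hm
      rw [Function.iterate_add_apply, hcycle,
        iterate_tstep_shift_of_nonpos δ N hd fun i hi => ih i (by omega)]
      have := ih m' (by omega)
      dsimp only
      omega

theorem trun_snd_nonpos_or_exists_lt_of_fst_eq {s : Q} {p : ℤ} {t₁ t₂ w : ℕ} (h₁₂ : t₁ < t₂)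
    (h₂ : t₂ ≤ w) (hq : (trun δ N s p t₁).1 = (trun δ N s p t₂).1)
    (hwin : ∀ t, t₁ ≤ t → t ≤ w → (trun δ N s p t).2 ≤ 0) :
    (∀ t, t₁ ≤ t → (trun δ N s p t).2 ≤ 0) ∨
      ∃ t < w, (trun δ N s p t).2 < (trun δ N s p w).2 := by
  set d := (trun δ N s p t₂).2 - (trun δ N s p t₁).2
  rcases le_or_gt d 0 with hd | hd
  · left
    have hcycle : (tstep δ N)^[t₂ - t₁] (trun δ N s p t₁) =
        ((trun δ N s p t₁).1, (trun δ N s p t₁).2 + d) := by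
      rw [← trun_add, Nat.sub_add_cancel h₁₂.le]
      exact Prod.ext hq.symm (by omega)
    intro t ht
    obtain ⟨i, rfl⟩ := Nat.exists_eq_add_of_le' ht
    rw [trun_add]
    refine iterate_tstep_snd_nonpos_of_drift_nonpos δ N (by omega) hd hcycle (fun j hj => ?_) i
    rw [← trun_add]
    exact hwin _ (by omega) (by omega)
  · right
    refine ⟨w - t₂ + t₁, by omega, ?_⟩
    have hback : trun δ N s p t₁ = ((trun δ N s p t₂).1, (trun δ N s p t₂).2 + -d) :=
      Prod.ext hq (by omega)
    have hshift := iterate_tstep_shift_of_nonpos δ N (c := trun δ N s p t₂) (m := w - t₂)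
      (by omega : -d ≤ 0) fun j hj => by rw [← trun_add]; exact hwin _ (by omega) (by omega)
    rw [← hback, ← trun_add, ← trun_add, Nat.sub_add_cancel h₂] at hshift
    rw [hshift]
    dsimp only
    omega

theorem neg_card_le_trun_snd [Fintype Q] (hδ : ∀ q x, |(δ q x).2| ≤ 1) {s : Q} {T : ℕ}
    (hT : 0 < (trun δ N s 0 T).2) {t : ℕ} (ht : t ≤ T) :
    -(Fintype.card Q : ℤ) ≤ (trun δ N s 0 t).2 := by
  classical
  set K := Fintype.card Q
  have hdist := abs_trun_snd_sub_le δ N hδ s 0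
  by_contra! hlow
  have hex : ∃ t ≤ T, (trun δ N s 0 t).2 < -K := ⟨t, ht, hlow⟩
  obtain ⟨hwT, hw⟩ := Nat.find_spec hex
  set w := Nat.find hex
  have hmin : ∀ t < w, -(K : ℤ) ≤ (trun δ N s 0 t).2 := fun t htw =>
    not_lt.mp fun h => Nat.find_min hex htw ⟨htw.le.trans hwT, h⟩
  have hwK : K + 1 ≤ w := by
    have := abs_le.mp (hdist 0 w)
    have h0 : (trun δ N s 0 0).2 = 0 := rfl
    rw [zero_add, h0] at this
    omega
  have hwin : ∀ t, w - (K + 1) ≤ t → t ≤ w → (trun δ N s 0 t).2 ≤ 0 := by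
    intro t h₁ h₂
    have := abs_le.mp (hdist t (w - t))
    rw [Nat.add_sub_cancel' h₂, Nat.cast_sub h₂] at this
    omega
  obtain ⟨t₁, ht₁, t₂, ht₂, hne, hq⟩ := Finset.exists_ne_map_eq_of_card_lt_of_maps_to
    (s := Finset.Icc (w - (K + 1)) w) (t := Finset.univ) (by simp [K]; omega)
    (f := fun t => (trun δ N s 0 t).1) fun _ _ => Finset.mem_univ _
  simp only [Finset.mem_Icc] at ht₁ ht₂
  wlog h₁₂ : t₁ < t₂ generalizing t₁ t₂
  · exact this t₂ t₁ hne.symm hq.symm ht₂ ht₁ (lt_of_le_of_ne (not_lt.mp h₁₂) hne.symm)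
  rcases trun_snd_nonpos_or_exists_lt_of_fst_eq δ N h₁₂ ht₂.2 hq
      fun t h₁ h₂ => hwin t (ht₁.1.trans h₁) h₂ with hleft | ⟨t', ht'w, ht'⟩
  · exact (hleft T (by omega)).not_gt hT
  · linarith [hmin t' ht'w]

theorem trun_snd_le_of_lt_first_hit (hδ : ∀ q x, |(δ q x).2| ≤ 1) {s : Q} {T : ℕ}
    (hpre : ∀ t < T, (trun δ N s 0 t).2 ≠ N + 1) {t : ℕ} (ht : t < T) :
    (trun δ N s 0 t).2 ≤ N := by
  induction t with
  | zero => exact Int.natCast_nonneg N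
  | succ t ih =>
    have := abs_le.mp (abs_trun_snd_sub_le δ N hδ s 0 t 1)
    have := ih (by omega)
    have := hpre _ ht
    push_cast at *
    omega

theorem ncard_visits_le [Fintype Q] {s : Q} {p₀ : ℤ} {T : ℕ}
    (hinj : Set.InjOn (trun δ N s p₀) (Set.Iio T)) (p : ℤ) :
    {t | t < T ∧ (trun δ N s p₀ t).2 = p}.ncard ≤ Fintype.card Q :=
  calc _ ≤ (Set.univ : Set Q).ncard :=
        Set.ncard_le_ncard_of_injOn (fun t => (trun δ N s p₀ t).1) (fun _ _ => Set.mem_univ _)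
          (fun _ h₁ _ h₂ h => hinj h₁.1 h₂.1 (Prod.ext h (h₁.2.trans h₂.2.symm))) Set.finite_univ
    _ = Fintype.card Q := by rw [Set.ncard_univ, Nat.card_eq_fintype_card]

end TwoWayRun

/-- a right traversal rebounds on the left endmarker at most `2|Q|` times
and lasts at most `G·N` steps, for a constant `G` depending only on the automaton. -/
theorem stmt9 {Q : Type} [Fintype Q] (δ : Q → TapeSym → Q × ℤ)
    (hδ : ∀ q x, (δ q x).2 = -1 ∨ (δ q x).2 = 0 ∨ (δ q x).2 = 1) :
    ∃ G : ℕ, ∀ N : ℕ, (∀ q : Q, amplitude (fun q => δ q TapeSym.a) q < (N : ℤ)) →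
      ∀ (s s' : Q) (T : ℕ),
        trun δ N s 0 T = (s', (N : ℤ) + 1) →
        (∀ t, t < T → (trun δ N s 0 t).2 ≠ (N : ℤ) + 1) →
        {t : ℕ | 0 < t ∧ t < T ∧ (trun δ N s 0 t).2 = 0}.ncard ≤ 2 * Fintype.card Q ∧
        T ≤ G * N := by
  have hstep : ∀ q x, |(δ q x).2| ≤ 1 := fun q x => by rcases hδ q x with h | h | h <;> simp [h]
  set K := Fintype.card Q
  refine ⟨K * (K + 2), fun N hamp s s' T hT hpre => ?_⟩
  have hN : 1 ≤ N := by
    have := amplitude_nonneg (fun q => δ q TapeSym.a) s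
    have := hamp s
    omega
  have hTN : (trun δ N s 0 T).2 = N + 1 := by rw [hT]
  have hinj : Set.InjOn (trun δ N s 0) (Set.Iio T) :=
    (Function.injOn_iterate_Iic_of_first_hit (P := fun c => c.2 = (N : ℤ) + 1) hTN hpre).mono
      Set.Iio_subset_Iic_self
  constructor
  · calc _ ≤ {t | t < T ∧ (trun δ N s 0 t).2 = 0}.ncard :=
          Set.ncard_le_ncard (fun t ht => ht.2) ((Set.finite_Iio T).subset fun t ht => ht.1)
      _ ≤ K := ncard_visits_le δ N hinj 0
      _ ≤ 2 * K := by omega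
  · have hbound := le_card_mul_of_injOn hinj fun t ht =>
      ⟨neg_card_le_trun_snd δ N hstep (by omega) ht.le,
        trun_snd_le_of_lt_first_hit δ N hstep hpre ht⟩
    calc T ≤ K * (N + K + 1) := by convert hbound using 2; omega
      _ ≤ K * (K + 2) * N := by
          rw [mul_assoc]
          exact Nat.mul_le_mul_left K (by nlinarith)
end

section
/- Let f : ℕ → {0,…,·}ⁿ be a position function whose graph {(N, f(N))} is Presburger-definable, and let σ be a global state of a deterministic multiautomaton. Then the set of N such that, starting from configuration (σ, f(N)), the multiautomaton reaches a broadcasting configuration, is a Presburger-definable (hence eventually periodic) subset of ℕ; moreover, for each global state τ there is at most one Presburger-definable position function g such that every such N whose first broadcasting configuration has global state τ has positions g(N) at that moment. -/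
/-- A linear subset of ℕᵏ. -/
def IsLinearSetNat {k : ℕ} (S : Set (Fin k → ℕ)) : Prop :=
  ∃ (m : ℕ) (a : Fin k → ℕ) (b : Fin m → Fin k → ℕ),
    S = {v | ∃ c : Fin m → ℕ, v = a + ∑ j, c j • b j}

/-- A semilinear (equivalently, Presburger-definable) subset of ℕᵏ. -/
def IsSemilinearSetNat {k : ℕ} (S : Set (Fin k → ℕ)) : Prop :=
  ∃ (m : ℕ) (f : Fin m → Set (Fin k → ℕ)),
    (∀ i, IsLinearSetNat (f i)) ∧ S = ⋃ i, f i

open scoped Classical in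
/-- One synchronous step of a multiautomaton: each component sees the vector of
messages (the states of the broadcasting components) and its own scanned symbol. -/
noncomputable def gstep {n : ℕ} {Q : Type}
    (δ : Fin n → Q → TapeSym → (Fin n → Option Q) → Q × ℤ)
    (B : Fin n → Q → Prop) (N : ℕ) (c : Fin n → Q × ℤ) : Fin n → Q × ℤ :=
  fun i =>
    let m : Fin n → Option Q := fun j => if B j (c j).1 then some (c j).1 else none
    ((δ i (c i).1 (symAt N (c i).2) m).1, (c i).2 + (δ i (c i).1 (symAt N (c i).2) m).2)

/-- The synchronous run of the multiautomaton after `t` steps. -/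
noncomputable def grun {n : ℕ} {Q : Type}
    (δ : Fin n → Q → TapeSym → (Fin n → Option Q) → Q × ℤ)
    (B : Fin n → Q → Prop) (N : ℕ) (c0 : Fin n → Q × ℤ) (t : ℕ) : Fin n → Q × ℤ :=
  (gstep δ B N)^[t] c0

/-- A global configuration is broadcasting if some component is in a broadcasting state. -/
def Broadcasting {n : ℕ} {Q : Type} (B : Fin n → Q → Prop) (c : Fin n → Q × ℤ) : Prop :=
  ∃ i, B i (c i).1

/-!
Until the first broadcast every message is `none`, so the multiautomaton broadcasts iff some
component, running alone, reaches one of its broadcasting states.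

For a single two-way automaton started in cell `m` of the tape `⊢ aᴺ ⊣`, record for the
`j` cells left of a cut which state the automaton leaves them in when entered in a given
state. This record for `j + 1` cells is determined by the one for `j` cells, so it is
eventually periodic in `j`. Two tapes whose right parts agree and whose left parts have the
same record give the same visits to the right part, hence (after making the broadcasting states
absorbing and right-moving) the same answer. By symmetry, whether the broadcasting states are
reached is invariant under inserting a period's worth of cells on either side of the start
once that side is long enough.

A semilinear position function is, along every residue class of some period `P`, an arithmetic
progression whose slope is at most `P`; so each side of each start position either stays fixed
or grows linearly along the class, and the set of `N` admitting a broadcast is eventually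
periodic, hence semilinear.
-/

theorem exists_periodic_of_succ_congr {α : Type*} [Finite α] (g : ℕ → α)
    (hg : ∀ i j, g i = g j → g (i + 1) = g (j + 1)) :
    ∃ K p, 0 < p ∧ ∀ i, K ≤ i → ∀ k, g (i + k * p) = g i := by
  obtain ⟨a, b, hab, heq⟩ : ∃ a b, a < b ∧ g a = g b := by
    obtain ⟨i, j, hne, heq⟩ := Finite.exists_ne_map_eq_of_infinite g
    rcases hne.lt_or_gt with h | h
    exacts [⟨i, j, h, heq⟩, ⟨j, i, h, heq.symm⟩]
  have hshift : ∀ j, g (a + j) = g (b + j) := fun j => by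
    induction j with
    | zero => exact heq
    | succ j ih => exact hg _ _ ih
  refine ⟨a, b - a, by omega, fun i hi k => ?_⟩
  induction k with
  | zero => simp
  | succ k ih =>
    rw [← ih, show i + (k + 1) * (b - a) = b + (i + k * (b - a) - a) by rw [add_mul]; omega,
      ← hshift, show a + (i + k * (b - a) - a) = i + k * (b - a) by omega]

/-- `H N m` is unchanged by inserting `k * p` cells left of position `m` once `K ≤ m`, and
right of it once the `N + 1 - m` cells there number at least `K`. -/
def IsPumpable (H : ℕ → ℕ → Prop) (K p : ℕ) : Prop :=
  (∀ N m k, K ≤ m → m ≤ N + 1 → (H (N + k * p) (m + k * p) ↔ H N m)) ∧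
    ∀ N m k, K + m ≤ N + 1 → (H (N + k * p) m ↔ H N m)

namespace IsPumpable

variable {H : ℕ → ℕ → Prop} {K p : ℕ}

lemma mono (h : IsPumpable H K p) {K' p' : ℕ} (hK : K ≤ K') (hp : p ∣ p') :
    IsPumpable H K' p' := by
  obtain ⟨c, rfl⟩ := hp
  refine ⟨fun N m k hm hmN => ?_, fun N m k hm => ?_⟩
  · rw [← mul_assoc, mul_right_comm]
    exact h.1 N m (k * c) (by omega) hmN
  · rw [← mul_assoc, mul_right_comm]
    exact h.2 N m (k * c) (by omega)

lemma add_mul_iff (h : IsPumpable H K p) {N m a b : ℕ} (hmN : m ≤ N + 1) (ha : a = 0 ∨ K ≤ m)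
    (hb : b = 0 ∨ K + m ≤ N + 1) : H (N + (a + b) * p) (m + a * p) ↔ H N m := by
  have hright : H (N + b * p) m ↔ H N m := by
    rcases hb with rfl | hb
    · simp
    · exact h.2 N m b hb
  rcases ha with rfl | ha
  · simpa using hright
  · rw [← hright, add_mul, add_comm (a * p), ← add_assoc]
    exact h.1 _ m a ha (by omega)

end IsPumpable

theorem exists_isPumpable_forall {ι : Type*} [Fintype ι] (H : ι → ℕ → ℕ → Prop)
    (h : ∀ i, ∃ K p, 0 < p ∧ IsPumpable (H i) K p) :
    ∃ K p, 0 < p ∧ ∀ i, IsPumpable (H i) K p := by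
  choose K p hp hH using h
  exact ⟨∑ i, K i, ∏ i, p i, Finset.prod_pos fun i _ => hp i, fun i =>
    (hH i).mono (Finset.single_le_sum (fun j _ => Nat.zero_le (K j)) (Finset.mem_univ i))
      (Finset.dvd_prod_of_mem p (Finset.mem_univ i))⟩

section Semilinear

variable {k : ℕ}

lemma IsLinearSetNat.isSemilinearSetNat {S : Set (Fin k → ℕ)} (h : IsLinearSetNat S) :
    IsSemilinearSetNat S :=
  ⟨1, fun _ => S, fun _ => h, (Set.iUnion_const S).symm⟩

lemma isSemilinearSetNat_empty : IsSemilinearSetNat (∅ : Set (Fin k → ℕ)) :=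
  ⟨0, Fin.elim0, fun i => i.elim0, by simp⟩

lemma IsSemilinearSetNat.union {S T : Set (Fin k → ℕ)} (hS : IsSemilinearSetNat S)
    (hT : IsSemilinearSetNat T) : IsSemilinearSetNat (S ∪ T) := by
  obtain ⟨m₁, F₁, hF₁, rfl⟩ := hS
  obtain ⟨m₂, F₂, hF₂, rfl⟩ := hT
  refine ⟨m₁ + m₂, Sum.elim F₁ F₂ ∘ finSumFinEquiv.symm, fun i => ?_, ?_⟩
  · rw [Function.comp_apply]
    generalize finSumFinEquiv.symm i = j
    cases j with
    | inl j => exact hF₁ j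
    | inr j => exact hF₂ j
  · rw [Function.comp_def, finSumFinEquiv.symm.surjective.iUnion_comp (Sum.elim F₁ F₂),
      Set.iUnion_sumElim]

lemma IsSemilinearSetNat.biUnion {ι : Type*} (s : Finset ι) {F : ι → Set (Fin k → ℕ)}
    (h : ∀ i ∈ s, IsSemilinearSetNat (F i)) : IsSemilinearSetNat (⋃ i ∈ s, F i) := by
  classical
  induction s using Finset.induction_on with
  | empty => simpa using isSemilinearSetNat_empty
  | insert i s _ ih =>
    rw [Finset.set_biUnion_insert]
    exact (h i (Finset.mem_insert_self i s)).union
      (ih fun j hj => h j (Finset.mem_insert_of_mem hj))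

lemma isLinearSetNat_progression (r P : ℕ) :
    IsLinearSetNat {v : Fin 1 → ℕ | ∃ c : ℕ, v 0 = r + c * P} := by
  refine ⟨1, fun _ => r, fun _ _ => P, Set.ext fun v => ?_⟩
  simp only [Set.mem_ofPred_eq, funext_iff, Fin.forall_fin_one, Finset.univ_unique,
    Finset.sum_singleton, Pi.add_apply, Pi.smul_apply, smul_eq_mul]
  exact ⟨fun ⟨c, hc⟩ => ⟨fun _ => c, hc⟩, fun ⟨c, hc⟩ => ⟨c 0, hc⟩⟩

section Linear

variable {m : ℕ} {a : Fin k → ℕ} {b : Fin m → Fin k → ℕ} {v : Fin k → ℕ}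

lemma add_smul_mem_linear (hv : v ∈ {v | ∃ c : Fin m → ℕ, v = a + ∑ j, c j • b j})
    (l : Fin m) (s : ℕ) : v + s • b l ∈ {v | ∃ c : Fin m → ℕ, v = a + ∑ j, c j • b j} := by
  classical
  obtain ⟨c, rfl⟩ := hv
  refine ⟨c + Pi.single l s, ?_⟩
  simp [add_smul, Finset.sum_add_distrib, add_assoc, Pi.single_apply]

lemma exists_ne_zero_of_mem_linear (hv : v ∈ {v | ∃ c : Fin m → ℕ, v = a + ∑ j, c j • b j})
    {i : Fin k} (hi : a i < v i) : ∃ l, b l i ≠ 0 := by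
  by_contra! hz
  obtain ⟨c, rfl⟩ := hv
  simp [hz] at hi

end Linear

end Semilinear

lemma add_mul_mem_iff_of_periodic {S : Set ℕ} {N₀ P : ℕ}
    (h : ∀ N, N₀ ≤ N → (N ∈ S ↔ N + P ∈ S)) {N : ℕ} (hN : N₀ ≤ N) (c : ℕ) :
    N + c * P ∈ S ↔ N ∈ S := by
  induction c with
  | zero => simp
  | succ c ih => rw [add_mul, one_mul, ← add_assoc, ← h (N + c * P) (by omega), ih]

lemma mem_iff_exists_progression_of_periodic {S : Set ℕ} {N₀ P : ℕ} (hP : 0 < P)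
    (h : ∀ N, N₀ ≤ N → (N ∈ S ↔ N + P ∈ S)) (N : ℕ) :
    N ∈ S ↔ ∃ r < N₀ + P, r ∈ S ∧ ∃ c, N = r + c * (if r < N₀ then 0 else P) := by
  constructor
  · intro hN
    by_cases hlt : N < N₀
    · exact ⟨N, by omega, hN, 0, by simp⟩
    · have hdecomp : N = N₀ + (N - N₀) % P + (N - N₀) / P * P := by
        have := Nat.mod_add_div' (N - N₀) P
        omega
      refine ⟨N₀ + (N - N₀) % P, by have := Nat.mod_lt (N - N₀) hP; omega, ?_,
        (N - N₀) / P, by rwa [if_neg (by omega)]⟩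
      rw [← add_mul_mem_iff_of_periodic h (by omega) ((N - N₀) / P), ← hdecomp]
      exact hN
  · rintro ⟨r, -, hr, c, rfl⟩
    split_ifs with hlt
    · simpa using hr
    · exact (add_mul_mem_iff_of_periodic h (by omega) c).2 hr

theorem isSemilinearSetNat_of_periodic {S : Set ℕ} {N₀ P : ℕ} (hP : 0 < P)
    (h : ∀ N, N₀ ≤ N → (N ∈ S ↔ N + P ∈ S)) :
    IsSemilinearSetNat {v : Fin 1 → ℕ | v 0 ∈ S} := by
  classical
  have hset : {v : Fin 1 → ℕ | v 0 ∈ S} = ⋃ r ∈ (Finset.range (N₀ + P)).filter (· ∈ S),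
      {v : Fin 1 → ℕ | ∃ c : ℕ, v 0 = r + c * (if r < N₀ then 0 else P)} := by
    ext v
    rw [show v ∈ {v : Fin 1 → ℕ | v 0 ∈ S} ↔ v 0 ∈ S from Iff.rfl,
      mem_iff_exists_progression_of_periodic hP h]
    simp only [Set.mem_iUnion, Finset.mem_filter, Finset.mem_range, exists_prop, and_assoc]
    rfl
  rw [hset]
  exact IsSemilinearSetNat.biUnion _ fun r _ => (isLinearSetNat_progression _ _).isSemilinearSetNat

lemma le_of_forall_add_mul_le {a b d P : ℕ} (h : ∀ k, a + k * d ≤ b + k * P) : d ≤ P := by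
  by_contra! hlt
  have := h (b + 1)
  nlinarith

theorem exists_add_mul_eq_of_isSemilinearSetNat_graph {n : ℕ} (f : ℕ → Fin n → ℕ)
    (hf : IsSemilinearSetNat {v : Fin (n + 1) → ℕ | ∀ i : Fin n, v i.succ = f (v 0) i}) :
    ∃ P K₀, 0 < P ∧ ∀ N, K₀ ≤ N → ∃ d : Fin n → ℕ, ∀ k, f (N + k * P) = f N + k • d := by
  obtain ⟨M, L, hL, hU⟩ := hf
  choose r a b hab using hL
  -- a common multiple of the nonzero first coordinates of all periods
  set P := ∏ j, ∏ l, max (b j l 0) 1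
  refine ⟨P, (∑ j, a j 0) + 1, Finset.prod_pos fun j _ => Finset.prod_pos fun l _ => by omega,
    fun N hN => ?_⟩
  have hgraph : ∀ v, v ∈ ⋃ j, L j ↔ ∀ i : Fin n, v i.succ = f (v 0) i := fun v => by
    rw [← hU]; rfl
  obtain ⟨j, hj⟩ := Set.mem_iUnion.1 ((hgraph (Fin.cons N (f N))).2 fun i => by simp)
  rw [hab j] at hj
  obtain ⟨l, hl⟩ := exists_ne_zero_of_mem_linear hj (i := 0) (by
    have := Finset.single_le_sum (f := fun j => a j 0) (fun _ _ => Nat.zero_le _)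
      (Finset.mem_univ j)
    simp only [Fin.cons_zero]
    omega)
  have hdvd : b j l 0 ∣ P := by
    have : max (b j l 0) 1 ∣ ∏ l, max (b j l 0) 1 := Finset.dvd_prod_of_mem _ (Finset.mem_univ l)
    rw [max_eq_left (Nat.one_le_iff_ne_zero.2 hl)] at this
    exact this.trans (Finset.dvd_prod_of_mem _ (Finset.mem_univ j))
  refine ⟨(P / b j l 0) • fun i => b j l i.succ, fun k => funext fun i => ?_⟩
  have hw := add_smul_mem_linear hj l (k * (P / b j l 0))
  rw [← hab j] at hw
  have := (hgraph _).1 (Set.mem_iUnion.2 ⟨j, hw⟩) i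
  simp only [Pi.add_apply, Pi.smul_apply, smul_eq_mul, Fin.cons_succ, Fin.cons_zero,
    mul_assoc, Nat.div_mul_cancel hdvd] at this
  simp [← this]

theorem exists_periodic_of_isPumpable {n : ℕ} (f : ℕ → Fin n → ℕ) (hf : ∀ N i, f N i ≤ N + 1)
    (hfgraph : IsSemilinearSetNat {v : Fin (n + 1) → ℕ | ∀ i : Fin n, v i.succ = f (v 0) i})
    {H : Fin n → ℕ → ℕ → Prop} {K p : ℕ} (hp : 0 < p) (hH : ∀ i, IsPumpable (H i) K p) :
    ∃ N₀ P, 0 < P ∧ ∀ N, N₀ ≤ N → ∀ i, (H i (N + P) (f (N + P) i) ↔ H i N (f N i)) := by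
  obtain ⟨P, K₀, hP, hlin⟩ := exists_add_mul_eq_of_isSemilinearSetNat_graph f hfgraph
  refine ⟨K₀ + K * P, P * p, by positivity, fun N hN i => ?_⟩
  obtain ⟨d, hd⟩ := hlin (N - K * P) (by omega)
  set N₀ := N - K * P
  have hN : N₀ + K * P = N := by omega
  have hdP : d i ≤ P := le_of_forall_add_mul_le (a := f N₀ i) (b := N₀ + 1) fun k => by
    have := hf (N₀ + k * P) i
    simp only [hd, Pi.add_apply, Pi.smul_apply, smul_eq_mul] at this
    omega
  have hfN : f N i = f N₀ i + K * d i := by simp [← hN, hd]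
  have hfN' : f (N + P * p) i = f N i + d i * p := by
    rw [show N + P * p = N₀ + (K + p) * P by rw [← hN]; ring, hd, hfN]
    simp only [Pi.add_apply, Pi.smul_apply, smul_eq_mul]
    ring
  -- pump `d i` periods into the left side of `f N i` and `P - d i` into its right side
  have hKd : K * P = K * d i + K * (P - d i) := by rw [← mul_add, Nat.add_sub_cancel' hdP]
  have hf₀ := hf N₀ i
  rw [hfN', show N + P * p = N + (d i + (P - d i)) * p by rw [Nat.add_sub_cancel' hdP]]
  refine (hH i).add_mul_iff (hf N i) ?_ ?_
  · rcases Nat.eq_zero_or_pos (d i) with h | h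
    · exact Or.inl h
    · exact Or.inr (by have := Nat.le_mul_of_pos_right K h; omega)
  · rcases Nat.eq_zero_or_pos (P - d i) with h | h
    · exact Or.inl h
    · exact Or.inr (by have := Nat.le_mul_of_pos_right K h; omega)

namespace TwoWay

variable {Q : Type*}

section Run

variable (δ : Q → TapeSym → Q × ℤ) (sym : ℤ → TapeSym)

def step (c : Q × ℤ) : Q × ℤ :=
  ((δ c.1 (sym c.2)).1, c.2 + (δ c.1 (sym c.2)).2)

def run (c : Q × ℤ) (t : ℕ) : Q × ℤ :=
  (step δ sym)^[t] c

@[simp]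
lemma run_zero (c : Q × ℤ) : run δ sym c 0 = c := rfl

lemma run_succ (c : Q × ℤ) (t : ℕ) : run δ sym c (t + 1) = step δ sym (run δ sym c t) :=
  Function.iterate_succ_apply' _ _ _

lemma run_add (c : Q × ℤ) (t s : ℕ) : run δ sym c (t + s) = run δ sym (run δ sym c t) s := by
  simp only [run, add_comm t s, Function.iterate_add_apply]

def Hit (B : Q → Prop) (c : Q × ℤ) : Prop :=
  ∃ t, B (run δ sym c t).1

def Exits (c : ℤ) (q q' : Q) : Prop :=
  ∃ t, run δ sym (q, c - 1) t = (q', c) ∧ ∀ s < t, (run δ sym (q, c - 1) s).2 < c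

end Run

def UnitMoves (δ : Q → TapeSym → Q × ℤ) : Prop :=
  ∀ q x, (δ q x).2 ∈ Set.Icc (-1 : ℤ) 1

section UnitMoves

variable {δ : Q → TapeSym → Q × ℤ} (hδ : UnitMoves δ) {sym : ℤ → TapeSym} {u : Q × ℤ} {c : ℤ}
include hδ

lemma UnitMoves.run_succ_mem (t : ℕ) :
    (run δ sym u (t + 1)).2 - (run δ sym u t).2 ∈ Set.Icc (-1 : ℤ) 1 := by
  rw [run_succ, step, add_sub_cancel_left]
  exact hδ _ _

lemma UnitMoves.run_succ_eq_sub_one {t : ℕ} (h : c ≤ (run δ sym u t).2)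
    (h' : (run δ sym u (t + 1)).2 < c) : (run δ sym u (t + 1)).2 = c - 1 := by
  have := hδ.run_succ_mem (sym := sym) (u := u) t
  simp only [Set.mem_Icc] at this
  omega

lemma UnitMoves.run_succ_eq {t : ℕ} (h : (run δ sym u t).2 < c)
    (h' : c ≤ (run δ sym u (t + 1)).2) : (run δ sym u (t + 1)).2 = c := by
  have := hδ.run_succ_mem (sym := sym) (u := u) t
  simp only [Set.mem_Icc] at this
  omega

lemma UnitMoves.exits_of_run {s t : ℕ} (hs : (run δ sym u s).2 = c - 1) (hst : s ≤ t)
    (hleft : ∀ w, s ≤ w → w < t → (run δ sym u w).2 < c) (ht : c ≤ (run δ sym u t).2) :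
    (run δ sym u t).2 = c ∧ Exits δ sym c (run δ sym u s).1 (run δ sym u t).1 := by
  have hne : s ≠ t := by
    rintro rfl
    omega
  obtain ⟨t, rfl⟩ : ∃ t', t = t' + 1 := ⟨t - 1, by omega⟩
  have hpos := hδ.run_succ_eq (hleft t (by omega) (by omega)) ht
  have hrun : ∀ j, run δ sym ((run δ sym u s).1, c - 1) j = run δ sym u (s + j) := fun j => by
    rw [run_add, ← hs]
  refine ⟨hpos, t + 1 - s, ?_, fun j hj => ?_⟩
  · rw [hrun, Nat.add_sub_cancel' hst, ← hpos]
  · rw [hrun]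
    exact hleft _ (by omega) (by omega)

end UnitMoves

def shift (d : ℤ) (c : Q × ℤ) : Q × ℤ :=
  (c.1, c.2 + d)

@[simp]
lemma shift_mk (d : ℤ) (q : Q) (x : ℤ) : shift d (q, x) = (q, x + d) := rfl

section Simulation

variable {δ : Q → TapeSym → Q × ℤ} {sym₁ sym₂ : ℤ → TapeSym} {c d : ℤ}

lemma step_shift (hsym : ∀ x, c ≤ x → sym₂ (x + d) = sym₁ x) {u : Q × ℤ} (hu : c ≤ u.2) :
    step δ sym₂ (shift d u) = shift d (step δ sym₁ u) := by
  simp only [step, shift, hsym u.2 hu, Prod.mk.injEq, true_and]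
  ring

/-- Each excursion of the first run into the cells left of `c` is matched, through `hexit`, by
an excursion of the second run into the cells left of `c + d` that ends in the same state. -/
theorem exists_run_eq_shift (hδ : UnitMoves δ) (hsym : ∀ x, c ≤ x → sym₂ (x + d) = sym₁ x)
    (hexit : ∀ q q', Exits δ sym₁ c q q' → Exits δ sym₂ (c + d) q q')
    {u : Q × ℤ} (hu : c ≤ u.2) (t₁ : ℕ) (ht₁ : c ≤ (run δ sym₁ u t₁).2) :
    ∃ t₂, run δ sym₂ (shift d u) t₂ = shift d (run δ sym₁ u t₁) ∧
      ∀ s₂ < t₂, c + d ≤ (run δ sym₂ (shift d u) s₂).2 →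
        ∃ s₁ < t₁, run δ sym₂ (shift d u) s₂ = shift d (run δ sym₁ u s₁) := by
  classical
  induction t₁ using Nat.strong_induction_on with
  | _ t₁ ih =>
  rcases Nat.eq_zero_or_pos t₁ with rfl | ht₁0
  · exact ⟨0, rfl, fun s hs => absurd hs (Nat.not_lt_zero s)⟩
  let visible : ℕ → Prop := fun s => c ≤ (run δ sym₁ u s).2
  -- the last visit of the first run to the right part before `t₁`
  set s := Nat.findGreatest visible (t₁ - 1)
  have hs : visible s := Nat.findGreatest_spec (Nat.zero_le _) (by simpa [visible] using hu)
  have hst : s < t₁ := by have := Nat.findGreatest_le (P := visible) (t₁ - 1); omega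
  have hleft : ∀ w, s < w → w < t₁ → (run δ sym₁ u w).2 < c := fun w h₁ h₂ =>
    not_le.mp (Nat.findGreatest_is_greatest h₁ (by omega))
  obtain ⟨t₂, ht₂, hvis⟩ := ih s hst hs
  have hstep : run δ sym₂ (shift d u) (t₂ + 1) = shift d (run δ sym₁ u (s + 1)) := by
    rw [run_succ, ht₂, step_shift hsym hs, run_succ]
  by_cases hdirect : s + 1 = t₁
  · rw [← hdirect]
    refine ⟨t₂ + 1, hstep, fun s₂ hs₂ hvis₂ => ?_⟩
    rcases Nat.lt_succ_iff_lt_or_eq.mp hs₂ with h | rfl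
    · obtain ⟨s₁, hs₁, e⟩ := hvis s₂ h hvis₂
      exact ⟨s₁, by omega, e⟩
    · exact ⟨s, by omega, ht₂⟩
  have hentry := hδ.run_succ_eq_sub_one hs (hleft (s + 1) (by omega) (by omega))
  obtain ⟨hexit₁, hexits⟩ :=
    hδ.exits_of_run hentry (by omega) (fun w h₁ h₂ => hleft w (by omega) h₂) ht₁
  obtain ⟨e, he, hein⟩ := hexit _ _ hexits
  have hexc : ∀ j, run δ sym₂ ((run δ sym₁ u (s + 1)).1, c + d - 1) j =
      run δ sym₂ (shift d u) (t₂ + 1 + j) := fun j => by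
    rw [run_add _ _ _ (t₂ + 1), hstep, shift, hentry, sub_add_eq_add_sub]
  refine ⟨t₂ + 1 + e, ?_, fun s₂ hs₂ hvis₂ => ?_⟩
  · rw [← hexc, he, ← hexit₁]
    rfl
  rcases lt_trichotomy s₂ t₂ with h | rfl | h
  · obtain ⟨s₁, hs₁, e⟩ := hvis s₂ h hvis₂
    exact ⟨s₁, by omega, e⟩
  · exact ⟨s, hst, ht₂⟩
  · have := hein (s₂ - (t₂ + 1)) (by omega)
    rw [hexc, Nat.add_sub_cancel' (by omega : t₂ + 1 ≤ s₂)] at this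
    omega

theorem exits_succ_of_exits (hδ : UnitMoves δ) (hsym : ∀ x, c ≤ x → sym₂ (x + d) = sym₁ x)
    (hexit : ∀ q q', Exits δ sym₁ c q q' → Exits δ sym₂ (c + d) q q') {q q' : Q}
    (h : Exits δ sym₁ (c + 1) q q') : Exits δ sym₂ (c + d + 1) q q' := by
  obtain ⟨t₁, hrun, hbelow⟩ := h
  have hstart : shift d (q, c + 1 - 1) = (q, c + d + 1 - 1) := by simp only [shift_mk]; ring_nf
  obtain ⟨t₂, h₂, hvis⟩ := exists_run_eq_shift hδ hsym hexit (u := (q, c + 1 - 1)) (by simp)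
    t₁ (by rw [hrun]; omega)
  rw [hstart] at h₂ hvis
  refine ⟨t₂, by rw [h₂, hrun, shift_mk]; ring_nf, fun s₂ hs₂ => ?_⟩
  by_contra hge
  obtain ⟨s₁, hs₁, e⟩ := hvis s₂ hs₂ (by omega)
  have := congrArg Prod.snd e
  have := hbelow s₁ hs₁
  simp only [shift] at *
  omega

theorem exits_succ_iff (hδ : UnitMoves δ) (hsym : ∀ x, c ≤ x → sym₂ (x + d) = sym₁ x)
    (hexit : ∀ q q', Exits δ sym₁ c q q' ↔ Exits δ sym₂ (c + d) q q') (q q' : Q) :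
    Exits δ sym₁ (c + 1) q q' ↔ Exits δ sym₂ (c + d + 1) q q' := by
  refine ⟨exits_succ_of_exits hδ hsym fun q q' => (hexit q q').1, fun h => ?_⟩
  have := exits_succ_of_exits (sym₁ := sym₂) (sym₂ := sym₁) (c := c + d) (d := -d) hδ
    (fun x hx => by rw [← hsym (x + -d) (by omega), neg_add_cancel_right])
    (fun q q' h => by simpa using (hexit q q').2 h) h
  simpa using this

end Simulation

/-- A run that reaches a right-absorbing `B` reaches it to the right of any cut, where
`exists_run_eq_shift` can see it. -/
def RightAbsorbing (δ : Q → TapeSym → Q × ℤ) (B : Q → Prop) : Prop :=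
  ∀ q x, B q → δ q x = (q, 1)

namespace RightAbsorbing

variable {δ : Q → TapeSym → Q × ℤ} {B : Q → Prop} (hB : RightAbsorbing δ B)
include hB

lemma run_add {sym : ℤ → TapeSym} {u : Q × ℤ} {t : ℕ} (ht : B (run δ sym u t).1) (j : ℕ) :
    run δ sym u (t + j) = ((run δ sym u t).1, (run δ sym u t).2 + j) := by
  induction j with
  | zero => simp
  | succ j ih =>
    rw [← add_assoc, run_succ, ih, step, hB _ _ ht]
    simp only [Prod.mk.injEq, true_and]
    push_cast
    ring

lemma exists_le_of_hit {sym : ℤ → TapeSym} {u : Q × ℤ} (h : Hit δ sym B u) (c : ℤ) :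
    ∃ t, c ≤ (run δ sym u t).2 ∧ B (run δ sym u t).1 := by
  obtain ⟨t, ht⟩ := h
  refine ⟨t + (c - (run δ sym u t).2).toNat, ?_⟩
  rw [hB.run_add ht]
  exact ⟨by omega, ht⟩

variable {sym₁ sym₂ : ℤ → TapeSym} {c d : ℤ}

theorem hit_shift (hδ : UnitMoves δ) (hsym : ∀ x, c ≤ x → sym₂ (x + d) = sym₁ x)
    (hexit : ∀ q q', Exits δ sym₁ c q q' → Exits δ sym₂ (c + d) q q')
    {u : Q × ℤ} (hu : c ≤ u.2) (h : Hit δ sym₁ B u) : Hit δ sym₂ B (shift d u) := by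
  obtain ⟨t₁, hc, hB₁⟩ := hB.exists_le_of_hit h c
  obtain ⟨t₂, h₂, -⟩ := exists_run_eq_shift hδ hsym hexit hu t₁ hc
  exact ⟨t₂, by rwa [h₂]⟩

theorem hit_shift_iff (hδ : UnitMoves δ) (hsym : ∀ x, c ≤ x → sym₂ (x + d) = sym₁ x)
    (hexit : ∀ q q', Exits δ sym₁ c q q' ↔ Exits δ sym₂ (c + d) q q')
    {u : Q × ℤ} (hu : c ≤ u.2) : Hit δ sym₂ B (shift d u) ↔ Hit δ sym₁ B u := by
  refine ⟨fun h => ?_, hB.hit_shift hδ hsym (fun q q' => (hexit q q').1) hu⟩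
  have := hB.hit_shift (sym₁ := sym₂) (sym₂ := sym₁) (c := c + d) (d := -d) hδ
    (fun x hx => by rw [← hsym (x + -d) (by omega), neg_add_cancel_right])
    (fun q q' h => by simpa using (hexit q q').2 h) (by simp [shift]; omega) h
  simpa [shift] using this

end RightAbsorbing

section Absorb

variable {δ : Q → TapeSym → Q × ℤ} {B : Q → Prop} {sym : ℤ → TapeSym}

open Classical in
noncomputable def absorb (δ : Q → TapeSym → Q × ℤ) (B : Q → Prop) : Q → TapeSym → Q × ℤ :=
  fun q x => if B q then (q, 1) else δ q x

lemma rightAbsorbing_absorb : RightAbsorbing (absorb δ B) B := fun q x hq => by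
  simp [absorb, hq]

lemma UnitMoves.absorb (hδ : UnitMoves δ) : UnitMoves (absorb δ B) := fun q x => by
  unfold TwoWay.absorb
  split_ifs
  · simp
  · exact hδ q x

lemma run_absorb {u : Q × ℤ} {t : ℕ} (h : ∀ s < t, ¬ B (run δ sym u s).1) :
    run (absorb δ B) sym u t = run δ sym u t := by
  induction t with
  | zero => rfl
  | succ t ih =>
    rw [run_succ, run_succ, ih fun s hs => h s (by omega)]
    simp [step, absorb, h t (by omega)]

theorem hit_absorb_iff {u : Q × ℤ} : Hit (absorb δ B) sym B u ↔ Hit δ sym B u := by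
  classical
  constructor
  · rintro ⟨t, ht⟩
    by_contra hno
    have hno' : ∀ s, ¬ B (run δ sym u s).1 := fun s hs => hno ⟨s, hs⟩
    rw [run_absorb fun s _ => hno' s] at ht
    exact hno' t ht
  · intro h
    refine ⟨Nat.find h, ?_⟩
    rw [run_absorb fun s hs => Nat.find_min h hs]
    exact Nat.find_spec h

end Absorb

section Locality

variable {δ : Q → TapeSym → Q × ℤ} {sym₁ sym₂ : ℤ → TapeSym}

lemma run_congr {u : Q × ℤ} {t : ℕ}
    (h : ∀ s < t, sym₁ (run δ sym₁ u s).2 = sym₂ (run δ sym₁ u s).2) :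
    run δ sym₂ u t = run δ sym₁ u t := by
  induction t with
  | zero => rfl
  | succ t ih =>
    rw [run_succ, run_succ, ih fun s hs => h s (by omega), step, step, h t (by omega)]

lemma exits_of_eqOn_left {c : ℤ} (h : ∀ x < c, sym₁ x = sym₂ x) {q q' : Q}
    (hq : Exits δ sym₁ c q q') : Exits δ sym₂ c q q' := by
  obtain ⟨t, hrun, hbelow⟩ := hq
  have hrun_eq : ∀ s ≤ t, run δ sym₂ (q, c - 1) s = run δ sym₁ (q, c - 1) s := fun s hs =>
    run_congr fun w hw => h _ (hbelow w (by omega))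
  exact ⟨t, by rw [hrun_eq t le_rfl, hrun], fun s hs => by
    rw [hrun_eq s hs.le]; exact hbelow s hs⟩

theorem exits_congr {c : ℤ} (h : ∀ x < c, sym₁ x = sym₂ x) (q q' : Q) :
    Exits δ sym₁ c q q' ↔ Exits δ sym₂ c q q' :=
  ⟨exits_of_eqOn_left h, exits_of_eqOn_left fun x hx => (h x hx).symm⟩

end Locality

def tape (l r : TapeSym) (N : ℕ) (x : ℤ) : TapeSym :=
  if x ≤ 0 then l else if (N : ℤ) + 1 ≤ x then r else TapeSym.a

def halfTape (l : TapeSym) (x : ℤ) : TapeSym :=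
  if x ≤ 0 then l else TapeSym.a

lemma tape_eq_halfTape (l r : TapeSym) {N : ℕ} {x : ℤ} (hx : x ≤ N) :
    tape l r N x = halfTape l x := by
  unfold tape halfTape
  split_ifs <;> first | rfl | omega

lemma tape_reflect (l r : TapeSym) (N : ℕ) (x : ℤ) : tape l r N (N + 1 - x) = tape r l N x := by
  unfold tape
  split_ifs <;> first | rfl | omega

theorem exists_exits_halfTape_periodic [Finite Q] {δ : Q → TapeSym → Q × ℤ} (hδ : UnitMoves δ)
    (l : TapeSym) : ∃ K p, 0 < p ∧ ∀ j, K ≤ j → ∀ k,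
      Exits δ (halfTape l) ((j + k * p : ℕ) + 1) = Exits δ (halfTape l) ((j : ℕ) + 1) := by
  refine exists_periodic_of_succ_congr (fun j : ℕ => Exits δ (halfTape l) ((j : ℤ) + 1))
    fun i j hij => ?_
  have hsym : ∀ x : ℤ, (i : ℤ) + 1 ≤ x → halfTape l (x + (j - i)) = halfTape l x := fun x hx => by
    unfold halfTape
    split_ifs <;> first | rfl | omega
  have hexit : ∀ q q', Exits δ (halfTape l) ((i : ℤ) + 1) q q' ↔
      Exits δ (halfTape l) ((i : ℤ) + 1 + (j - i)) q q' := fun q q' => by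
    rw [show (i : ℤ) + 1 + (j - i) = (j : ℤ) + 1 by ring, hij]
  funext q q'
  have := exits_succ_iff hδ hsym hexit q q'
  push_cast
  rw [show (i : ℤ) + 1 + (j - i) + 1 = j + 1 + 1 by ring] at this
  exact propext this

theorem exists_hit_tape_add_mul_iff [Finite Q] {δ : Q → TapeSym → Q × ℤ} (hδ : UnitMoves δ)
    (B : Q → Prop) (l r : TapeSym) (q₀ : Q) :
    ∃ K p, 0 < p ∧ ∀ N m k : ℕ, K ≤ m → m ≤ N + 1 →
      (Hit δ (tape l r (N + k * p)) B (q₀, ((m + k * p : ℕ) : ℤ)) ↔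
        Hit δ (tape l r N) B (q₀, m)) := by
  obtain ⟨K, p, hp, hper⟩ := exists_exits_halfTape_periodic (hδ.absorb (B := B)) l
  refine ⟨K + 1, p, hp, fun N m k hm hmN => ?_⟩
  have hsym : ∀ x : ℤ, (m : ℤ) ≤ x →
      tape l r (N + k * p) (x + ((k * p : ℕ) : ℤ)) = tape l r N x := fun x hx => by
    have : (0 : ℤ) ≤ k * p := by positivity
    unfold tape
    push_cast
    split_ifs <;> first | rfl | omega
  have hexit : ∀ q q', Exits (absorb δ B) (tape l r N) m q q' ↔
      Exits (absorb δ B) (tape l r (N + k * p)) (m + ((k * p : ℕ) : ℤ)) q q' := fun q q' => by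
    rw [exits_congr (fun x hx => tape_eq_halfTape l r (by omega)),
      exits_congr (fun x hx => tape_eq_halfTape l r (by push_cast at hx ⊢; omega))]
    have := congrFun₂ (hper (m - 1) (by omega) k) q q'
    rw [show (((m - 1 + k * p : ℕ) : ℤ) + 1) = m + ((k * p : ℕ) : ℤ) by push_cast; omega,
      show (((m - 1 : ℕ) : ℤ) + 1) = m by omega] at this
    rw [this]
  rw [← hit_absorb_iff (δ := δ), ← hit_absorb_iff (δ := δ)]
  convert rightAbsorbing_absorb.hit_shift_iff hδ.absorb hsym hexit (u := (q₀, m)) le_rfl using 2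
  simp

def mirror (δ : Q → TapeSym → Q × ℤ) : Q → TapeSym → Q × ℤ :=
  fun q x => ((δ q x).1, -(δ q x).2)

lemma UnitMoves.mirror {δ : Q → TapeSym → Q × ℤ} (hδ : UnitMoves δ) : UnitMoves (mirror δ) :=
  fun q x => by
    have := hδ q x
    simp only [TwoWay.mirror, Set.mem_Icc] at this ⊢
    omega

lemma run_mirror (δ : Q → TapeSym → Q × ℤ) (sym : ℤ → TapeSym) (z : ℤ) (u : Q × ℤ) (t : ℕ) :
    run (mirror δ) (fun y => sym (z - y)) (u.1, z - u.2) t =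
      ((run δ sym u t).1, z - (run δ sym u t).2) := by
  induction t with
  | zero => rfl
  | succ t ih =>
    rw [run_succ, run_succ, ih]
    simp only [step, mirror, sub_sub_cancel, Prod.mk.injEq, true_and]
    ring

theorem hit_mirror_tape_iff (δ : Q → TapeSym → Q × ℤ) (B : Q → Prop) (l r : TapeSym) (N : ℕ)
    (q : Q) (x : ℤ) :
    Hit (mirror δ) (tape r l N) B (q, N + 1 - x) ↔ Hit δ (tape l r N) B (q, x) := by
  have hreflect : tape r l N = fun y => tape l r N (N + 1 - y) :=
    funext fun y => (tape_reflect l r N y).symm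
  simp only [Hit, hreflect, run_mirror δ (tape l r N) (N + 1) (q, x)]

theorem exists_isPumpable_hit [Finite Q] {δ : Q → TapeSym → Q × ℤ} (hδ : UnitMoves δ)
    (B : Q → Prop) (l r : TapeSym) (q₀ : Q) :
    ∃ K p, 0 < p ∧ IsPumpable (fun N m => Hit δ (tape l r N) B (q₀, m)) K p := by
  obtain ⟨K₁, p₁, hp₁, hleft⟩ := exists_hit_tape_add_mul_iff hδ B l r q₀
  obtain ⟨K₂, p₂, hp₂, hright⟩ := exists_hit_tape_add_mul_iff hδ.mirror B r l q₀
  refine ⟨K₁ + K₂, p₁ * p₂, by positivity, fun N m k hm hmN => ?_, fun N m k hm => ?_⟩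
  · rw [mul_comm p₁, ← mul_assoc]
    exact hleft N m (k * p₂) (by omega) hmN
  · simp only [← hit_mirror_tape_iff δ B l r]
    rw [← mul_assoc]
    convert hright N (N + 1 - m) (k * p₁) (by omega) (by omega) using 3 <;> push_cast <;> omega

end TwoWay

section Multi

variable {n : ℕ} {Q : Type} (δ : Fin n → Q → TapeSym → (Fin n → Option Q) → Q × ℤ)
  (B : Fin n → Q → Prop) (N : ℕ)

def silent (i : Fin n) : Q → TapeSym → Q × ℤ :=
  fun q x => δ i q x fun _ => none

lemma gstep_of_not_broadcasting {c : Fin n → Q × ℤ} (h : ¬ Broadcasting B c) :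
    gstep δ B N c = fun i => TwoWay.step (silent δ i) (symAt N) (c i) := by
  classical
  funext i
  have hnone : (fun j => if B j (c j).1 then some (c j).1 else none) = fun _ => none :=
    funext fun j => if_neg fun hj => h ⟨j, hj⟩
  simp only [gstep, hnone]
  rfl

lemma grun_eq_run {c₀ : Fin n → Q × ℤ} {t : ℕ}
    (h : ∀ s < t, ¬ Broadcasting B (grun δ B N c₀ s)) :
    grun δ B N c₀ t = fun i => TwoWay.run (silent δ i) (symAt N) (c₀ i) t := by
  induction t with
  | zero => rfl
  | succ t ih =>
    rw [grun, Function.iterate_succ_apply', ← grun,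
      gstep_of_not_broadcasting δ B N (h t (by omega)), ih fun s hs => h s (by omega)]
    funext i
    rw [TwoWay.run_succ]

theorem exists_broadcasting_iff (c₀ : Fin n → Q × ℤ) :
    (∃ t, Broadcasting B (grun δ B N c₀ t)) ↔
      ∃ i, TwoWay.Hit (silent δ i) (symAt N) (B i) (c₀ i) := by
  classical
  constructor
  · intro h
    obtain ⟨i, hi⟩ := Nat.find_spec h
    rw [grun_eq_run δ B N fun s hs => Nat.find_min h hs] at hi
    exact ⟨i, _, hi⟩
  · rintro ⟨i, t, ht⟩
    by_contra hno
    have hno' : ∀ s, ¬ Broadcasting B (grun δ B N c₀ s) := fun s hs => hno ⟨s, hs⟩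
    exact hno' t (by rw [grun_eq_run δ B N fun s _ => hno' s]; exact ⟨i, ht⟩)

end Multi

/-- for a Presburger-definable position function `f` and a global state
`σ`, the set of `N` such that the multiautomaton started in `(σ, f(N))` reaches a
broadcasting configuration is Presburger-definable, hence eventually periodic; and for
each global state `τ` the positions at the first broadcast with global state `τ` are
given by at most one position function. -/
theorem stmt13 {n : ℕ} {Q : Type} [Fintype Q]
    (δ : Fin n → Q → TapeSym → (Fin n → Option Q) → Q × ℤ)
    (hδ : ∀ i q x m, (δ i q x m).2 = -1 ∨ (δ i q x m).2 = 0 ∨ (δ i q x m).2 = 1)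
    (B : Fin n → Q → Prop)
    (f : ℕ → Fin n → ℕ) (hf : ∀ N i, f N i ≤ N + 1)
    (hfgraph : IsSemilinearSetNat {v : Fin (n + 1) → ℕ | ∀ i : Fin n, v i.succ = f (v 0) i})
    (σ : Fin n → Q) :
    (IsSemilinearSetNat {v : Fin 1 → ℕ |
        ∃ t, Broadcasting B (grun δ B (v 0) (fun i => (σ i, (f (v 0) i : ℤ))) t)} ∧
     EventuallyPeriodic {N : ℕ |
        ∃ t, Broadcasting B (grun δ B N (fun i => (σ i, (f N i : ℤ))) t)}) ∧
    ∀ (τ : Fin n → Q) (g₁ g₂ : ℕ → Fin n → ℕ),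
      (∀ N t, (∀ u, u < t → ¬ Broadcasting B (grun δ B N (fun i => (σ i, (f N i : ℤ))) u)) →
        Broadcasting B (grun δ B N (fun i => (σ i, (f N i : ℤ))) t) →
        (∀ i, (grun δ B N (fun i => (σ i, (f N i : ℤ))) t i).1 = τ i) →
        ∀ i, (grun δ B N (fun i => (σ i, (f N i : ℤ))) t i).2 = (g₁ N i : ℤ)) →
      (∀ N t, (∀ u, u < t → ¬ Broadcasting B (grun δ B N (fun i => (σ i, (f N i : ℤ))) u)) →
        Broadcasting B (grun δ B N (fun i => (σ i, (f N i : ℤ))) t) →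
        (∀ i, (grun δ B N (fun i => (σ i, (f N i : ℤ))) t i).1 = τ i) →
        ∀ i, (grun δ B N (fun i => (σ i, (f N i : ℤ))) t i).2 = (g₂ N i : ℤ)) →
      ∀ N t, (∀ u, u < t → ¬ Broadcasting B (grun δ B N (fun i => (σ i, (f N i : ℤ))) u)) →
        Broadcasting B (grun δ B N (fun i => (σ i, (f N i : ℤ))) t) →
        (∀ i, (grun δ B N (fun i => (σ i, (f N i : ℤ))) t i).1 = τ i) →
        g₁ N = g₂ N := by
  have hunit : ∀ i, TwoWay.UnitMoves (silent δ i) := fun i q x => by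
    rcases hδ i q x fun _ => none with h | h | h <;> simp [silent, h]
  obtain ⟨K, p, hp, hpump⟩ := exists_isPumpable_forall
    (fun i N m => TwoWay.Hit (silent δ i) (symAt N) (B i) (σ i, m))
    fun i => TwoWay.exists_isPumpable_hit (hunit i) (B i) .lmark .rmark (σ i)
  obtain ⟨N₀, P, hP, hper⟩ := exists_periodic_of_isPumpable f hf hfgraph hp hpump
  have hperiodic : ∀ N, N₀ ≤ N →
      ((∃ t, Broadcasting B (grun δ B N (fun i => (σ i, (f N i : ℤ))) t)) ↔
        ∃ t, Broadcasting B (grun δ B (N + P) (fun i => (σ i, (f (N + P) i : ℤ))) t)) := by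
    intro N hN
    simp only [exists_broadcasting_iff]
    exact exists_congr fun i => (hper N hN i).symm
  refine ⟨⟨isSemilinearSetNat_of_periodic hP hperiodic, N₀, P, hP, hperiodic⟩, ?_⟩
  intro τ g₁ g₂ h₁ h₂ N t hbefore hnow hτ
  funext i
  exact_mod_cast (h₁ N t hbefore hnow hτ i).symm.trans (h₂ N t hbefore hnow hτ i)
end
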